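/- arXiv:2008.10101 — 8 statements merged into one kernel-verified Lean document; each statement's English description precedes it below -/
import Mathlib

section
/- Let (J, 𝒜) be a standard Borel space and let φ and ψ be finite signed Borel measures on J × J. There exists a circulation α with φ(S) ≤ α(S) ≤ ψ(S) for every Borel set S ⊆ J × J if and only if φ(S) ≤ ψ(S) for every Borel set S ⊆ J × J and φ(X × Xᶜ) ≤ ψ(Xᶜ × X) for every Borel set X ⊆ J. -/
/-!
Necessity: a circulation `α` satisfies `α (X ×ˢ Xᶜ) = α (Xᶜ ×ˢ X)`.

Sufficiency: writing `α = φ + γ`, one needs `0 ≤ γ ≤ ψ - φ` whose net inflow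
`γ (univ ×ˢ A) - γ (A ×ˢ univ)` is the demand `δ A = φ (A ×ˢ univ) - φ (univ ×ˢ A)`, and the cut
condition says `δ X ≤ (ψ - φ) (Xᶜ ×ˢ X)`. For finitely many Borel sets, push everything forward
along the map recording which of them contain a point: on the resulting finite network this is
Gale's supply–demand theorem, proved by separating `δ` from the compact convex set of net
inflows of flows within capacity and refuting the separating potential by a layer-cake argument.
The solution lifts back to `J` through a Radon–Nikodym density. The order interval
`[0, ψ - φ]` is compact for setwise convergence (Tychonoff; domination by a finite measure makes
limits countably additive), so a limit along an ultrafilter on finite families of Borel sets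
conserves flow at every Borel set.
-/

open MeasureTheory Set Filter Topology

section FiniteNetwork

variable {T : Type*} [Fintype T]

lemma max_sub_zero_eq_max_min_add_max_max (a b t : ℝ) :
    max (b - a) 0 = max (min b t - min a t) 0 + max (max b t - max a t) 0 := by
  simp only [max_def, min_def]
  split_ifs <;> linarith

/-- Against a potential `y`, a flow within the capacities `b` gains at most
`∑ b σ τ * (y τ - y σ)⁺`, while a flow with net inflow `d` gains exactly `∑ d σ * y σ`. -/
def potentialSlack (d : T → ℝ) (b : T → T → ℝ) (y : T → ℝ) : ℝ :=
  ∑ σ, ∑ τ, b σ τ * max (y τ - y σ) 0 - ∑ σ, d σ * y σ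

variable {d : T → ℝ} {b : T → T → ℝ}

lemma potentialSlack_eq_min_add_max (hd : ∑ σ, d σ = 0) (y : T → ℝ) (t : ℝ) :
    potentialSlack d b y =
      potentialSlack d b (fun σ => min (y σ) t) + potentialSlack d b (fun σ => max (y σ) t) := by
  have hdy : ∑ σ, d σ * y σ = ∑ σ, d σ * min (y σ) t + ∑ σ, d σ * max (y σ) t := by
    have h : ∀ σ, d σ * y σ = d σ * min (y σ) t + d σ * max (y σ) t - d σ * t := fun σ => by
      rw [← mul_add, min_add_max]; ring
    rw [Finset.sum_congr rfl fun σ _ => h σ, Finset.sum_sub_distrib, Finset.sum_add_distrib,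
      ← Finset.sum_mul, hd, zero_mul, sub_zero]
  have hgain : ∀ σ τ, b σ τ * max (y τ - y σ) 0 = b σ τ * max (min (y τ) t - min (y σ) t) 0 +
      b σ τ * max (max (y τ) t - max (y σ) t) 0 := fun σ τ => by
    rw [max_sub_zero_eq_max_min_add_max_max _ _ t, mul_add]
  unfold potentialSlack
  simp only [hgain, Finset.sum_add_distrib, hdy]
  ring

lemma potentialSlack_ite_nonneg [DecidableEq T] (hd : ∑ σ, d σ = 0)
    (hcut : ∀ R : Finset T, ∑ σ ∈ R, d σ ≤ ∑ σ ∈ Rᶜ, ∑ τ ∈ R, b σ τ)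
    (R : Finset T) {p q : ℝ} (hpq : p ≤ q) :
    0 ≤ potentialSlack d b (fun σ => if σ ∈ R then q else p) := by
  have hgain : ∀ σ τ, b σ τ * max ((if τ ∈ R then q else p) - if σ ∈ R then q else p) 0 =
      if σ ∈ Rᶜ then (if τ ∈ R then (q - p) * b σ τ else 0) else 0 := by
    intro σ τ
    by_cases hσ : σ ∈ R <;> by_cases hτ : τ ∈ R <;> simp [hσ, hτ, hpq, mul_comm]
  have hdemand : ∀ σ, d σ * (if σ ∈ R then q else p) =
      d σ * p + if σ ∈ R then (q - p) * d σ else 0 := by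
    intro σ
    split_ifs <;> ring
  have : potentialSlack d b (fun σ => if σ ∈ R then q else p) =
      (q - p) * (∑ σ ∈ Rᶜ, ∑ τ ∈ R, b σ τ - ∑ σ ∈ R, d σ) := by
    simp only [potentialSlack, hgain, hdemand, Finset.sum_add_distrib, ← Finset.sum_mul, hd,
      zero_mul, zero_add, Finset.sum_ite_irrel, Finset.sum_const_zero, Finset.sum_ite_mem,
      Finset.univ_inter, Finset.mul_sum, mul_sub]
  rw [this]
  exact mul_nonneg (sub_nonneg.2 hpq) (sub_nonneg.2 (hcut R))

theorem potentialSlack_nonneg [DecidableEq T] (hd : ∑ σ, d σ = 0)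
    (hcut : ∀ R : Finset T, ∑ σ ∈ R, d σ ≤ ∑ σ ∈ Rᶜ, ∑ τ ∈ R, b σ τ) (y : T → ℝ) :
    0 ≤ potentialSlack d b y := by
  classical
  suffices h : ∀ s : Finset ℝ, ∀ y : T → ℝ, (∀ σ, y σ ∈ s) → 0 ≤ potentialSlack d b y from
    h _ y fun σ => Finset.mem_image_of_mem y (Finset.mem_univ σ)
  intro s
  induction s using Finset.induction_on_max with
  | empty =>
    intro y hy
    have : IsEmpty T := ⟨fun σ => Finset.notMem_empty _ (hy σ)⟩
    simp [potentialSlack]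
  | insert a s hlt ih =>
    intro y hy
    rcases s.eq_empty_or_nonempty with rfl | hs
    · have hy : y = fun σ => if σ ∈ (∅ : Finset T) then a else a :=
        funext fun σ => by simpa using hy σ
      exact hy ▸ potentialSlack_ite_nonneg hd hcut ∅ le_rfl
    -- below `t` the function `y` takes fewer values, above `t` only two
    set t := s.max' hs
    have hta : t < a := hlt t (s.max'_mem hs)
    have hle : ∀ x ∈ s, x ≤ t := fun x hx => s.le_max' x hx
    have hmax : (fun σ => max (y σ) t) =
        fun σ => if σ ∈ Finset.univ.filter (y · = a) then a else t := by
      funext σ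
      rcases Finset.mem_insert.1 (hy σ) with h | h
      · simp [h, hta.le]
      · simp [(hlt _ h).ne, hle _ h]
    rw [potentialSlack_eq_min_add_max hd y t, hmax]
    refine add_nonneg (ih _ fun σ => ?_) (potentialSlack_ite_nonneg hd hcut _ hta.le)
    rcases Finset.mem_insert.1 (hy σ) with h | h
    · simpa [h, hta.le] using s.max'_mem hs
    · simpa [hle _ h] using h

def netInflow : (T → T → ℝ) →ₗ[ℝ] T → ℝ where
  toFun x σ := ∑ τ, x τ σ - ∑ τ, x σ τ
  map_add' x z := by
    ext σ
    simp only [Pi.add_apply, Finset.sum_add_distrib]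
    ring
  map_smul' c x := by
    ext σ
    simp [Finset.mul_sum, mul_sub]

lemma sum_netInflow_mul (x : T → T → ℝ) (y : T → ℝ) :
    ∑ σ, netInflow x σ * y σ = ∑ σ, ∑ τ, x σ τ * (y τ - y σ) := by
  simp only [netInflow, LinearMap.coe_mk, AddHom.coe_mk, sub_mul, Finset.sum_mul,
    Finset.sum_sub_distrib, mul_sub]
  rw [Finset.sum_comm (f := fun σ τ => x τ σ * y σ)]

theorem exists_mem_Icc_netInflow_eq [DecidableEq T] (hb : 0 ≤ b) (hd : ∑ σ, d σ = 0)
    (hcut : ∀ R : Finset T, ∑ σ ∈ R, d σ ≤ ∑ σ ∈ Rᶜ, ∑ τ ∈ R, b σ τ) :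
    ∃ x ∈ Icc 0 b, netInflow x = d := by
  by_contra! h
  obtain ⟨f, u, hfx, hfd⟩ := geometric_hahn_banach_closed_point
    ((convex_Icc 0 b).linear_image netInflow)
    (isCompact_Icc.image netInflow.continuous_of_finiteDimensional).isClosed
    fun ⟨x, hx, hxd⟩ => h x hx hxd
  set y : T → ℝ := fun σ => f fun τ => if σ = τ then 1 else 0
  have hf : ∀ z, f z = ∑ σ, z σ * y σ := fun z => by
    simpa [y] using LinearMap.pi_apply_eq_sum_univ (f : (T → ℝ) →ₗ[ℝ] ℝ) z
  let x : T → T → ℝ := fun σ τ => if y σ < y τ then b σ τ else 0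
  have hx : x ∈ Icc 0 b := by
    have hb : ∀ σ τ, 0 ≤ b σ τ := hb
    constructor <;> intro σ τ <;> by_cases hστ : y σ < y τ <;> simp [x, hστ, hb σ τ]
  have hgain : f (netInflow x) = ∑ σ, ∑ τ, b σ τ * max (y τ - y σ) 0 := by
    rw [hf, sum_netInflow_mul]
    refine Finset.sum_congr rfl fun σ _ => Finset.sum_congr rfl fun τ _ => ?_
    by_cases hστ : y σ < y τ
    · simp [x, hστ, hστ.le]
    · simp [x, hστ, not_lt.1 hστ]
  have hslack := potentialSlack_nonneg hd hcut y
  rw [potentialSlack] at hslack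
  linarith [hfx _ ⟨x, hx, rfl⟩, hf d]

end FiniteNetwork

namespace MeasureTheory

lemma measureReal_finset_prod {α β : Type*} [MeasurableSpace α] [MeasurableSpace β]
    [MeasurableSingletonClass α] [MeasurableSingletonClass β] (ν : Measure (α × β)) [SigmaFinite ν]
    (A : Finset α) (B : Finset β) :
    ν.real (↑A ×ˢ ↑B) = ∑ σ ∈ A, ∑ τ ∈ B, ν.real {(σ, τ)} := by
  rw [← Finset.coe_product, ← sum_measureReal_singleton, Finset.sum_product]

lemma VectorMeasure.apply_finset_eq_sum_singleton {α M : Type*} [MeasurableSpace α]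
    [MeasurableSingletonClass α] [AddCommMonoid M] [TopologicalSpace M] [T2Space M]
    (v : VectorMeasure α M) (R : Finset α) : v ↑R = ∑ σ ∈ R, v {σ} := by
  rw [← Set.biUnion_of_singleton (R : Set α), Finset.set_biUnion_coe]
  exact VectorMeasure.of_biUnion_finset (Set.pairwiseDisjoint_singleton' _)
    fun _ _ => measurableSet_singleton _

theorem Measure.exists_le_netInflow_eq_of_fintype {T : Type*} [Fintype T] [MeasurableSpace T]
    [MeasurableSingletonClass T] (μ : Measure (T × T)) [IsFiniteMeasure μ]
    (δ : SignedMeasure T) (hδ : δ univ = 0) (hcut : ∀ R : Set T, δ R ≤ μ.real (Rᶜ ×ˢ R)) :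
    ∃ ν ≤ μ, ∀ R : Set T, ν.real (univ ×ˢ R) - ν.real (R ×ˢ univ) = δ R := by
  classical
  obtain ⟨x, hx, hflow⟩ := exists_mem_Icc_netInflow_eq (d := fun σ => δ {σ})
    (b := fun σ τ => μ.real {(σ, τ)}) (fun σ τ => measureReal_nonneg)
    (by rw [← VectorMeasure.apply_finset_eq_sum_singleton, Finset.coe_univ, hδ])
    (fun R => by
      simpa [← VectorMeasure.apply_finset_eq_sum_singleton, ← measureReal_finset_prod] using hcut R)
  let ν : Measure (T × T) := ∑ z, ENNReal.ofReal (x z.1 z.2) • Measure.dirac z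
  have hν : ∀ z, ν {z} = ENNReal.ofReal (x z.1 z.2) := fun z => by
    simp [ν, Measure.dirac_apply', Pi.single_apply]
  have hle : ν ≤ μ := Measure.le_iff'.2 fun S => by
    rw [← Set.coe_toFinset S, ← sum_measure_singleton, ← sum_measure_singleton]
    refine Finset.sum_le_sum fun z _ => ?_
    rw [hν, ← ofReal_measureReal]
    exact ENNReal.ofReal_le_ofReal (hx.2 z.1 z.2)
  have : IsFiniteMeasure ν := isFiniteMeasure_of_le μ hle
  have hνreal : ∀ σ τ, ν.real {(σ, τ)} = x σ τ := fun σ τ => by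
    have hx0 : ∀ σ τ, 0 ≤ x σ τ := hx.1
    simp [measureReal_def, hν, hx0 σ τ]
  refine ⟨ν, hle, fun R => ?_⟩
  rw [← Set.coe_toFinset R, ← Finset.coe_univ, measureReal_finset_prod, measureReal_finset_prod,
    VectorMeasure.apply_finset_eq_sum_singleton]
  simp only [hνreal]
  rw [Finset.sum_comm (s := Finset.univ), ← Finset.sum_sub_distrib]
  exact Finset.sum_congr rfl fun σ _ => congr_fun hflow σ

theorem Measure.exists_le_map_eq_of_le_map {X Y : Type*} [MeasurableSpace X] [MeasurableSpace Y]
    {μ : Measure X} [IsFiniteMeasure μ] {p : X → Y} (hp : Measurable p) {ν : Measure Y}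
    (hν : ν ≤ μ.map p) : ∃ ν' ≤ μ, ν'.map p = ν := by
  have : IsFiniteMeasure ν := isFiniteMeasure_of_le _ hν
  set f := ν.rnDeriv (μ.map p)
  refine ⟨μ.withDensity (f ∘ p), ?_, ?_⟩
  · calc μ.withDensity (f ∘ p) ≤ μ.withDensity 1 :=
          withDensity_mono (ae_of_ae_map hp.aemeasurable (Measure.rnDeriv_le_one_of_le hν))
      _ = μ := withDensity_one
  · ext S hS
    rw [Measure.map_apply hp hS, withDensity_apply _ (hp hS)]
    simp only [Function.comp_apply]
    rw [← setLIntegral_map hS (Measure.measurable_rnDeriv _ _) hp, ← withDensity_apply _ hS,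
      Measure.withDensity_rnDeriv_eq _ _ (Measure.absolutelyContinuous_of_le hν)]

theorem Measure.exists_le_netInflow_eq_of_finset {J : Type*} [MeasurableSpace J]
    (μ : Measure (J × J)) [IsFiniteMeasure μ] (δ : SignedMeasure J) (hδ : δ univ = 0)
    (hcut : ∀ X, MeasurableSet X → δ X ≤ μ.real (Xᶜ ×ˢ X)) (F : Finset (Set J))
    (hF : ∀ A ∈ F, MeasurableSet A) :
    ∃ ν ≤ μ, ∀ A ∈ F, ν.real (univ ×ˢ A) - ν.real (A ×ˢ univ) = δ A := by
  classical
  let q : J → (F → Bool) := fun x A => decide (x ∈ (A : Set J))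
  have hq : Measurable q :=
    measurable_pi_lambda _ fun A => measurable_to_bool (by simpa [q, preimage] using hF A A.2)
  have hp : Measurable (Prod.map q q) := hq.prodMap hq
  obtain ⟨νF, hνF, hflow⟩ :=
    Measure.exists_le_netInflow_eq_of_fintype (μ.map (Prod.map q q)) (δ.map q)
    (by rw [VectorMeasure.map_apply _ hq MeasurableSet.univ, preimage_univ, hδ])
    fun R => by
      rw [VectorMeasure.map_apply _ hq (.of_discrete), map_measureReal_apply hp (.of_discrete),
        Set.preimage_prod_map_prod, Set.preimage_compl]
      exact hcut _ (hq .of_discrete)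
  obtain ⟨ν, hνμ, rfl⟩ := Measure.exists_le_map_eq_of_le_map hp hνF
  refine ⟨ν, hνμ, fun A hA => ?_⟩
  have hA' : q ⁻¹' {σ | σ ⟨A, hA⟩ = true} = A := by
    ext x
    simp [q]
  have h := hflow {σ | σ ⟨A, hA⟩ = true}
  rwa [map_measureReal_apply hp .of_discrete, map_measureReal_apply hp .of_discrete,
    VectorMeasure.map_apply _ hq .of_discrete, Set.preimage_prod_map_prod,
    Set.preimage_prod_map_prod, preimage_univ, hA'] at h

theorem SignedMeasure.exists_tendsto_of_le_toSignedMeasure {ι α : Type*} [MeasurableSpace α]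
    {μ : Measure α} [IsFiniteMeasure μ] (v : ι → SignedMeasure α) (hv0 : ∀ i, 0 ≤ v i)
    (hvμ : ∀ i, v i ≤ μ.toSignedMeasure) (l : Ultrafilter ι) :
    ∃ w : SignedMeasure α, 0 ≤ w ∧ w ≤ μ.toSignedMeasure ∧
      ∀ S, Tendsto (fun i => v i S) l (𝓝 (w S)) := by
  obtain ⟨L, ⟨hL0, hLμ⟩, hlim⟩ := isCompact_Icc.ultrafilter_le_nhds
    (l.map fun i S => v i S) (le_principal_iff.2 (Ultrafilter.mem_map.2 (univ_mem' fun i =>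
      ⟨VectorMeasure.le_iff'.1 (hv0 i), VectorMeasure.le_iff'.1 (hvμ i)⟩)))
  have hL : ∀ S, Tendsto (fun i => v i S) l (𝓝 (L S)) := tendsto_pi_nhds.1 hlim
  have hL0 : ∀ S, 0 ≤ L S := fun S => by simpa using hL0 S
  have hLμ : ∀ S, L S ≤ μ.toSignedMeasure S := hLμ
  have hbound : ∀ S, ‖L S‖ₑ ≤ μ S := fun S => by
    rw [Real.enorm_of_nonneg (hL0 S), ← ofReal_measureReal]
    refine ENNReal.ofReal_le_ofReal ((hLμ S).trans ?_)
    by_cases hS : MeasurableSet S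
    · rw [Measure.toSignedMeasure_apply_measurable hS]
    · rw [VectorMeasure.not_measurable _ hS]
      exact measureReal_nonneg
  have hadd : ∀ S S', MeasurableSet S → MeasurableSet S' → Disjoint S S' →
      L (S ∪ S') = L S + L S' := fun S S' hS hS' hSS' => by
    refine tendsto_nhds_unique (hL _) ?_
    simpa only [VectorMeasure.of_union hSS' hS hS'] using (hL S).add (hL S')
  have hnull : ∀ S, ¬MeasurableSet S → L S = 0 := fun S hS =>
    le_antisymm ((hLμ S).trans_eq (VectorMeasure.not_measurable _ hS)) (hL0 S)
  exact ⟨VectorMeasure.of_additive_of_le_measure L hbound hadd hnull,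
    VectorMeasure.le_iff'.2 fun S => by rw [zero_apply]; exact hL0 S,
    VectorMeasure.le_iff'.2 hLμ, hL⟩

theorem SignedMeasure.exists_netInflow_eq {J : Type*} [MeasurableSpace J]
    {κ : SignedMeasure (J × J)} (hκ : 0 ≤ κ) (δ : SignedMeasure J) (hδ : δ univ = 0)
    (hcut : ∀ X, MeasurableSet X → δ X ≤ κ (Xᶜ ×ˢ X)) :
    ∃ γ : SignedMeasure (J × J), 0 ≤ γ ∧ γ ≤ κ ∧
      ∀ A, MeasurableSet A → γ (univ ×ˢ A) - γ (A ×ˢ univ) = δ A := by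
  classical
  set μ := κ.toMeasureOfZeroLE univ MeasurableSet.univ
    ((VectorMeasure.le_restrict_univ_iff_le _ _).2 hκ)
  have hμ : μ.toSignedMeasure = κ := SignedMeasure.toMeasureOfZeroLE_toSignedMeasure _ _
  have hcutμ : ∀ X, MeasurableSet X → δ X ≤ μ.real (Xᶜ ×ˢ X) := fun X hX => by
    rw [← Measure.toSignedMeasure_apply_measurable (hX.compl.prod hX), hμ]
    exact hcut X hX
  choose ν hνμ hν using fun F : Finset (Set J) =>
    Measure.exists_le_netInflow_eq_of_finset μ δ hδ hcutμ (F.filter MeasurableSet)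
      fun A hA => (Finset.mem_filter.1 hA).2
  have : ∀ F, IsFiniteMeasure (ν F) := fun F => isFiniteMeasure_of_le μ (hνμ F)
  obtain ⟨γ, hγ0, hγμ, hlim⟩ := SignedMeasure.exists_tendsto_of_le_toSignedMeasure
    (fun F => (ν F).toSignedMeasure) (fun F => Measure.zero_le_toSignedMeasure _)
    (fun F => (Measure.toSignedMeasure_le_toSignedMeasure_iff _ _).2 (hνμ F))
    (Ultrafilter.of (atTop : Filter (Finset (Set J))))
  refine ⟨γ, hγ0, hμ ▸ hγμ, fun A hA => ?_⟩
  have hev : ∀ᶠ F in atTop,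
      (ν F).toSignedMeasure (univ ×ˢ A) - (ν F).toSignedMeasure (A ×ˢ univ) = δ A :=
    (eventually_ge_atTop {A}).mono fun F hF => by
      rw [Measure.toSignedMeasure_apply_measurable (MeasurableSet.univ.prod hA),
        Measure.toSignedMeasure_apply_measurable (hA.prod MeasurableSet.univ)]
      exact hν F A (Finset.mem_filter.2 ⟨Finset.singleton_subset_iff.1 hF, hA⟩)
  exact tendsto_nhds_unique ((hlim _).sub (hlim _))
    (tendsto_const_nhds.congr' (Ultrafilter.of_le _ (hev.mono fun F h => h.symm)))

lemma VectorMeasure.apply_prod_univ_sub_apply_univ_prod {J M : Type*} [MeasurableSpace J]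
    [AddCommGroup M] [TopologicalSpace M] [T2Space M] (α : VectorMeasure (J × J) M) {X : Set J}
    (hX : MeasurableSet X) :
    α (X ×ˢ univ) - α (univ ×ˢ X) = α (X ×ˢ Xᶜ) - α (Xᶜ ×ˢ X) := by
  have hrow : α (X ×ˢ univ) = α (X ×ˢ X) + α (X ×ˢ Xᶜ) := by
    rw [← VectorMeasure.of_union (disjoint_compl_right.set_prod_right _ _) (hX.prod hX)
      (hX.prod hX.compl), ← prod_union, union_compl_self]
  have hcol : α (univ ×ˢ X) = α (X ×ˢ X) + α (Xᶜ ×ˢ X) := by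
    rw [← VectorMeasure.of_union (disjoint_compl_right.set_prod_left _ _) (hX.prod hX)
      (hX.compl.prod hX), ← union_prod, union_compl_self]
  rw [hrow, hcol]
  abel

end MeasureTheory

theorem stmt_0_general {J : Type*} [MeasurableSpace J]
    (φ ψ : SignedMeasure (J × J)) :
    (∃ α : SignedMeasure (J × J),
        (∀ A : Set J, MeasurableSet A → α (A ×ˢ (univ : Set J)) = α ((univ : Set J) ×ˢ A)) ∧
        φ ≤ α ∧ α ≤ ψ) ↔
      (φ ≤ ψ ∧ ∀ X : Set J, MeasurableSet X → φ (X ×ˢ Xᶜ) ≤ ψ (Xᶜ ×ˢ X)) := by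
  constructor
  · rintro ⟨α, hα, hφα, hαψ⟩
    refine ⟨hφα.trans hαψ, fun X hX => ?_⟩
    have hαX := α.apply_prod_univ_sub_apply_univ_prod hX
    rw [hα X hX, sub_self, eq_comm, sub_eq_zero] at hαX
    calc φ (X ×ˢ Xᶜ) ≤ α (X ×ˢ Xᶜ) := hφα _ (hX.prod hX.compl)
      _ = α (Xᶜ ×ˢ X) := hαX
      _ ≤ ψ (Xᶜ ×ˢ X) := hαψ _ (hX.compl.prod hX)
  · rintro ⟨hφψ, hcut⟩
    set δ := φ.map Prod.fst - φ.map Prod.snd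
    have hδ : ∀ A, MeasurableSet A → δ A = φ (A ×ˢ univ) - φ (univ ×ˢ A) := fun A hA => by
      rw [sub_apply, VectorMeasure.map_apply _ measurable_fst hA,
        VectorMeasure.map_apply _ measurable_snd hA, prod_univ, univ_prod]
    obtain ⟨γ, hγ0, hγ, hγδ⟩ := SignedMeasure.exists_netInflow_eq (κ := ψ - φ)
      (fun S hS => by simpa using hφψ S hS) δ (by rw [hδ univ .univ, sub_self])
      fun X hX => by
        rw [hδ X hX, φ.apply_prod_univ_sub_apply_univ_prod hX, sub_apply]
        linarith [hcut X hX]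
    refine ⟨φ + γ, fun A hA => ?_, fun S hS => ?_, fun S hS => ?_⟩
    · linarith [hγδ A hA, hδ A hA, add_apply φ γ (A ×ˢ univ), add_apply φ γ (univ ×ˢ A)]
    · simpa using hγ0 S hS
    · linarith [hγ S hS, sub_apply ψ φ S, add_apply φ γ S]

/-- **Generalized Hoffman Circulation Theorem.**
Let `(J, 𝒜)` be a standard Borel space and `φ`, `ψ` finite signed Borel measures on `J × J`.
There exists a circulation `α` (a finite signed measure on `J × J` with equal marginals)
with `φ ≤ α ≤ ψ` (setwise) iff `φ ≤ ψ` and `φ(X × Xᶜ) ≤ ψ(Xᶜ × X)` for every Borel `X`. -/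
theorem stmt_0 {J : Type*} [MeasurableSpace J] [StandardBorelSpace J]
    (φ ψ : SignedMeasure (J × J)) :
    (∃ α : SignedMeasure (J × J),
        (∀ A : Set J, MeasurableSet A → α (A ×ˢ (univ : Set J)) = α ((univ : Set J) ×ˢ A)) ∧
        φ ≤ α ∧ α ≤ ψ) ↔
      (φ ≤ ψ ∧ ∀ X : Set J, MeasurableSet X → φ (X ×ˢ Xᶜ) ≤ ψ (Xᶜ ×ˢ X)) :=
  stmt_0_general φ ψ
end

section
/- Let (J, 𝒜) be a standard Borel space and let ψ be a finite nonnegative Borel measure on J × J. There exists a nonnegative circulation η on J × J with η(J × J) = 1 and η ≤ ψ (an ergodic circulation dominated by ψ) if and only if ∫ (1 + F)₊ dψ ≥ 1 for every potential F, where g₊ denotes the positive part of the function g. -/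
/-!
Necessity: for a circulation `η ≤ ψ` of mass one, `∫ (1 + F)₊ dψ ≥ ∫ (1 + F) dη = 1`, because
the two marginals of `η` give `f` the same integral.

Sufficiency: look for `η = h • ψ` with `h` in the set `K = {0 ≤ h ≤ 1}` of `L²(ψ)`, which is
weakly compact; we need `⟪1, h⟫ = 1` and `h ⊥ w` for all potentials `w`. By compactness it is
enough to meet finitely many of these constraints. Then the image of `K` in `ℝ × ℝⁿ` is compact
and convex, and a functional separating it from `(1, 0)` yields `t > 0` and a potential `F` with
`∫ (t + F)₊ dψ = sup_{h ∈ K} ⟪t + F, h⟫ < t`, which contradicts the hypothesis. Orthogonality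
to `1_B(x) - 1_B(y)` says that `h • ψ` has equal marginals.
-/

open MeasureTheory Set
open scoped RealInnerProductSpace

section InnerProductSpace

variable {E : Type*} [NormedAddCommGroup E] [InnerProductSpace ℝ E]

open InnerProductSpace NormedSpace in
theorem range_inclusionInDoubleDualWeak_eq_univ [CompleteSpace E] :
    range (inclusionInDoubleDualWeak ℝ E) = univ := by
  refine eq_univ_of_forall fun Φ => ?_
  let ℓ : StrongDual ℝ E :=
    { toFun := fun x => Φ (toDual ℝ E x)
      map_add' := fun x y => by simp
      map_smul' := fun c x => by simp
      cont := (Φ : StrongDual ℝ (StrongDual ℝ E)).continuous.comp (toDual ℝ E).continuous }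
  refine ⟨toWeakSpace ℝ E ((toDual ℝ E).symm ℓ), ContinuousLinearMap.ext fun φ => ?_⟩
  obtain ⟨y, rfl⟩ := (toDual ℝ E).surjective φ
  change ⟪y, (toDual ℝ E).symm ℓ⟫ = ℓ y
  rw [real_inner_comm, toDual_symm_apply]

theorem isCompact_toWeakSpace_image [CompleteSpace E] {K : Set E} (hb : Bornology.IsBounded K)
    (hc : IsClosed K) (hconv : Convex ℝ K) : IsCompact (toWeakSpace ℝ E '' K) := by
  rw [← hc.closure_eq, hconv.toWeakSpace_closure ℝ]
  refine NormedSpace.isCompact_closure_of_isBounded ℝ E _ ?_ ?_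
  · rwa [preimage_image_eq _ (toWeakSpace ℝ E).injective]
  · simp [range_inclusionInDoubleDualWeak_eq_univ]

theorem continuous_inner_toWeakSpace_symm (g : E) :
    Continuous fun x : WeakSpace ℝ E => ⟪g, (toWeakSpace ℝ E).symm x⟫ :=
  WeakBilin.eval_continuous _ (innerSL ℝ g)

theorem StrongDual.apply_prod_pi {ι : Type*} [Fintype ι] [DecidableEq ι]
    (φ : StrongDual ℝ (ℝ × (ι → ℝ))) (x : ℝ) (y : ι → ℝ) :
    φ (x, y) = x * φ (1, 0) + ∑ i, y i * φ (0, Pi.single i 1) := by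
  have hxy : (x, y) = x • ((1 : ℝ), (0 : ι → ℝ)) + ∑ i, y i • ((0 : ℝ), Pi.single i (1 : ℝ)) := by
    ext
    · simp [Prod.fst_sum]
    · simp [Prod.snd_sum, Finset.sum_apply, Pi.single_apply]
  rw [hxy, map_add, map_sum]
  simp only [map_smul, smul_eq_mul]

variable {K : Set E}

theorem exists_mem_inner_eq_one_forall_inner_eq_zero {ι : Type*} [Fintype ι]
    (hKc : IsCompact (toWeakSpace ℝ E '' K)) (hKconv : Convex ℝ K) (hK0 : 0 ∈ K) (e : E)
    (g : ι → E) (H : ∀ w ∈ Submodule.span ℝ (range g), ∃ h ∈ K, 1 ≤ ⟪e + w, h⟫) :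
    ∃ h ∈ K, ⟪e, h⟫ = 1 ∧ ∀ i, ⟪g i, h⟫ = 0 := by
  classical
  let Φ : E →ₗ[ℝ] ℝ × (ι → ℝ) := (innerₛₗ ℝ e).prod (LinearMap.pi fun i => innerₛₗ ℝ (g i))
  have hS : IsCompact (Φ '' K) := by
    have := hKc.image (show Continuous fun x : WeakSpace ℝ E => Φ ((toWeakSpace ℝ E).symm x) from
      (continuous_inner_toWeakSpace_symm e).prodMk
        (continuous_pi fun i => continuous_inner_toWeakSpace_symm (g i)))
    simpa [image_image] using this
  by_contra! hne
  have hnot : ((1 : ℝ), (0 : ι → ℝ)) ∉ Φ '' K := by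
    rintro ⟨h, hK, hΦ⟩
    obtain ⟨i, hi⟩ := hne h hK (congrArg Prod.fst hΦ)
    exact hi (congrFun (congrArg Prod.snd hΦ) i)
  obtain ⟨φ, u, hlt, hgt⟩ :=
    geometric_hahn_banach_closed_point (hKconv.linear_image Φ) hS.isClosed hnot
  set t := φ (1, 0)
  set w := ∑ i, φ (0, Pi.single i 1) • g i
  have hφΦ : ∀ h, φ (Φ h) = ⟪t • e + w, h⟫ := by
    intro h
    rw [show Φ h = (⟪e, h⟫, fun i => ⟪g i, h⟫) from rfl, StrongDual.apply_prod_pi]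
    simp only [w, inner_add_left, real_inner_smul_left, sum_inner, mul_comm]
    rfl
  have ht : 0 < t := (by simpa using hlt _ (mem_image_of_mem Φ hK0) : (0 : ℝ) < u).trans hgt
  have hw : t⁻¹ • w ∈ Submodule.span ℝ (range g) :=
    Submodule.smul_mem _ _ (Submodule.sum_mem _ fun i _ =>
      Submodule.smul_mem _ _ (Submodule.subset_span (mem_range_self i)))
  obtain ⟨h, hK, hh⟩ := H _ hw
  have : t ≤ φ (Φ h) := by
    rw [hφΦ, show t • e + w = t • (e + t⁻¹ • w) by
      rw [smul_add, smul_smul, mul_inv_cancel₀ ht.ne', one_smul], real_inner_smul_left]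
    exact le_mul_of_one_le_right ht.le hh
  linarith [hlt _ (mem_image_of_mem Φ hK)]

theorem exists_mem_inner_eq_one_mem_orthogonal (hKc : IsCompact (toWeakSpace ℝ E '' K))
    (hKconv : Convex ℝ K) (hK0 : 0 ∈ K) (e : E) (P : Submodule ℝ E)
    (H : ∀ w ∈ P, ∃ h ∈ K, 1 ≤ ⟪e + w, h⟫) :
    ∃ h ∈ K, ⟪e, h⟫ = 1 ∧ h ∈ Pᗮ := by
  set symm := (toWeakSpace ℝ E).symm
  have hs : IsCompact (toWeakSpace ℝ E '' K ∩ {x | ⟪e, symm x⟫ = 1}) :=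
    hKc.inter_right (isClosed_eq (continuous_inner_toWeakSpace_symm e) continuous_const)
  obtain ⟨_, ⟨⟨h, hK, rfl⟩, he⟩, hP⟩ := hs.inter_iInter_nonempty
    (fun w : P => {x | ⟪(w : E), symm x⟫ = 0})
    (fun w => isClosed_eq (continuous_inner_toWeakSpace_symm _) continuous_const) fun u => by
      obtain ⟨h, hK, he, hu⟩ := exists_mem_inner_eq_one_forall_inner_eq_zero hKc hKconv hK0 e
        (fun w : u => ((w : P) : E)) fun w hw => H w <| Submodule.span_le.2
          (by rintro _ ⟨w, rfl⟩; exact (w : P).2) hw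
      exact ⟨toWeakSpace ℝ E h, ⟨⟨h, hK, rfl⟩, he⟩, mem_iInter₂.2 fun w hw => hu ⟨w, hw⟩⟩
  exact ⟨h, hK, he, (Submodule.mem_orthogonal P h).2 fun w hw => mem_iInter.1 hP ⟨w, hw⟩⟩

end InnerProductSpace

theorem setIntegral_pos_eq_integral_max_zero {α : Type*} [MeasurableSpace α] (μ : Measure α)
    {g : α → ℝ} (hg : Measurable g) :
    ∫ p in {p | 0 < g p}, g p ∂μ = ∫ p, max (g p) 0 ∂μ := by
  rw [← integral_indicator (measurableSet_lt measurable_const hg)]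
  congr 1 with p
  by_cases hp : 0 < g p
  · simp [hp, hp.le]
  · simp [hp, not_lt.1 hp]

section LpIcc

variable {α : Type*} [MeasurableSpace α] (μ : Measure α) [IsFiniteMeasure μ] {p : ENNReal}

theorem mem_Icc_zero_const_one_iff {h : Lp ℝ p μ} :
    h ∈ Icc 0 (Lp.const p μ 1) ↔ ∀ᵐ x ∂μ, h x ∈ Icc (0 : ℝ) 1 := by
  have h1 := Lp.coeFn_const p μ (1 : ℝ)
  rw [mem_Icc, ← Lp.coeFn_nonneg, ← Lp.coeFn_le]
  constructor
  · rintro ⟨h0, hle⟩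
    filter_upwards [h0, hle, h1] with x h0x hlex h1x
    exact ⟨h0x, hlex.trans_eq h1x⟩
  · intro hh
    exact ⟨hh.mono fun x hx => hx.1,
      by filter_upwards [hh, h1] with x hx h1x; exact hx.2.trans_eq h1x.symm⟩

theorem zero_mem_Icc_zero_const_one : (0 : Lp ℝ p μ) ∈ Icc 0 (Lp.const p μ 1) :=
  ⟨le_rfl, (Lp.coeFn_nonneg _).1 <| by
    filter_upwards [Lp.coeFn_const p μ (1 : ℝ)] with x hx
    rw [hx]
    exact zero_le_one⟩

theorem convex_Icc_zero_const_one : Convex ℝ (Icc 0 (Lp.const p μ (1 : ℝ))) := by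
  intro x hx y hy a b ha hb hab
  rw [mem_Icc_zero_const_one_iff] at hx hy ⊢
  filter_upwards [hx, hy, Lp.coeFn_add (a • x) (b • y), Lp.coeFn_smul a x, Lp.coeFn_smul b y]
    with z hxz hyz hadd hax hby
  rw [hadd, Pi.add_apply, hax, hby]
  exact convex_Icc (0 : ℝ) 1 hxz hyz ha hb hab

theorem isBounded_Icc_zero_const_one [Fact (1 ≤ p)] :
    Bornology.IsBounded (Icc 0 (Lp.const p μ (1 : ℝ))) := by
  refine isBounded_iff_forall_norm_le.2 ⟨‖Lp.const p μ (1 : ℝ)‖, fun h hh => ?_⟩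
  refine Lp.norm_le_norm_of_ae_le ?_
  filter_upwards [(mem_Icc_zero_const_one_iff μ).1 hh, Lp.coeFn_const p μ (1 : ℝ)] with x hx h1
  rw [h1, Function.const_apply, norm_one, Real.norm_of_nonneg hx.1]
  exact hx.2

theorem withDensity_apply_eq_ofReal_inner {h : Lp ℝ 2 μ} (h0 : 0 ≤ᵐ[μ] h) {A : Set α}
    (hA : MeasurableSet A) :
    μ.withDensity (fun x => ENNReal.ofReal (h x)) A =
      ENNReal.ofReal (⟪indicatorConstLp 2 hA (measure_ne_top μ A) (1 : ℝ), h⟫) := by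
  rw [withDensity_apply _ hA, L2.inner_indicatorConstLp_one,
    ofReal_integral_eq_lintegral_ofReal ((Lp.memLp h).integrable one_le_two).integrableOn
      (ae_restrict_of_ae h0)]

end LpIcc

section Circulation

variable {J : Type*} [MeasurableSpace J] (ψ : Measure (J × J)) [IsFiniteMeasure ψ]

def potentials : Submodule ℝ (Lp ℝ 2 ψ) where
  carrier := {w | ∃ f : J → ℝ, Measurable f ∧ (∃ C, ∀ x, |f x| ≤ C) ∧
    w =ᵐ[ψ] fun p => f p.1 - f p.2}
  add_mem' := by
    rintro v w ⟨f, hf, ⟨C, hC⟩, hv⟩ ⟨g, hg, ⟨D, hD⟩, hw⟩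
    refine ⟨f + g, hf.add hg, ⟨C + D, fun x => (abs_add_le _ _).trans (add_le_add (hC x) (hD x))⟩,
      ?_⟩
    filter_upwards [Lp.coeFn_add v w, hv, hw] with p hp hvp hwp
    simp only [hp, Pi.add_apply, hvp, hwp]
    ring
  zero_mem' := ⟨0, measurable_const, ⟨0, by simp⟩, by
    filter_upwards [Lp.coeFn_zero ℝ 2 ψ] with p hp
    rw [hp]
    simp⟩
  smul_mem' := by
    rintro c w ⟨f, hf, ⟨C, hC⟩, hw⟩
    refine ⟨c • f, hf.const_smul c, ⟨|c| * C, fun x => ?_⟩, ?_⟩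
    · simpa [abs_mul] using mul_le_mul_of_nonneg_left (hC x) (abs_nonneg c)
    · filter_upwards [Lp.coeFn_smul c w, hw] with p hp hwp
      simp only [hp, Pi.smul_apply, hwp, smul_eq_mul]
      ring

theorem indicatorConstLp_fst_sub_snd_mem_potentials {B : Set J} (hB : MeasurableSet B) :
    indicatorConstLp 2 (measurable_fst hB) (measure_ne_top ψ _) (1 : ℝ) -
      indicatorConstLp 2 (measurable_snd hB) (measure_ne_top ψ _) 1 ∈ potentials ψ := by
  refine ⟨B.indicator 1, measurable_one.indicator hB, ⟨1, fun x => ?_⟩, ?_⟩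
  · by_cases hx : x ∈ B <;> simp [hx]
  · filter_upwards [Lp.coeFn_sub (indicatorConstLp 2 (measurable_fst hB) (measure_ne_top ψ _)
      (1 : ℝ)) (indicatorConstLp 2 (measurable_snd hB) (measure_ne_top ψ _) 1),
      indicatorConstLp_coeFn (hs := measurable_fst hB) (hμs := measure_ne_top ψ _) (c := (1 : ℝ)),
      indicatorConstLp_coeFn (hs := measurable_snd hB) (hμs := measure_ne_top ψ _) (c := (1 : ℝ))]
      with p hp h1 h2
    rw [hp, Pi.sub_apply, h1, h2]
    rfl

theorem exists_mem_Icc_one_le_inner_const_one_add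
    (hyp : ∀ f : J → ℝ, Measurable f → (∃ C, ∀ x, |f x| ≤ C) →
      1 ≤ ∫ p, max (1 + (f p.1 - f p.2)) 0 ∂ψ) :
    ∀ w ∈ potentials ψ, ∃ h ∈ Icc 0 (Lp.const 2 ψ (1 : ℝ)),
      1 ≤ ⟪Lp.const 2 ψ 1 + w, h⟫ := by
  rintro w ⟨f, hf, hb, hw⟩
  have hg : Measurable fun p : J × J => 1 + (f p.1 - f p.2) :=
    measurable_const.add ((hf.comp measurable_fst).sub (hf.comp measurable_snd))
  have hS : MeasurableSet {p : J × J | 0 < 1 + (f p.1 - f p.2)} :=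
    measurableSet_lt measurable_const hg
  refine ⟨indicatorConstLp 2 hS (measure_ne_top ψ _) 1, ?_, ?_⟩
  · rw [mem_Icc_zero_const_one_iff]
    filter_upwards [indicatorConstLp_coeFn (hs := hS) (hμs := measure_ne_top ψ _) (c := (1 : ℝ))]
      with p hp
    rw [hp]
    by_cases hpS : p ∈ {p | 0 < 1 + (f p.1 - f p.2)} <;> simp [hpS]
  · have hS_eq : ∫ p in {p | 0 < 1 + (f p.1 - f p.2)}, (Lp.const 2 ψ (1 : ℝ) + w) p ∂ψ =
        ∫ p in {p | 0 < 1 + (f p.1 - f p.2)}, 1 + (f p.1 - f p.2) ∂ψ := by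
      refine setIntegral_congr_ae hS ?_
      filter_upwards [Lp.coeFn_add (Lp.const 2 ψ (1 : ℝ)) w, Lp.coeFn_const 2 ψ (1 : ℝ), hw]
        with p hp h1 hwp _
      rw [hp, Pi.add_apply, h1, hwp]
      rfl
    rw [real_inner_comm, L2.inner_indicatorConstLp_one, hS_eq,
      setIntegral_pos_eq_integral_max_zero ψ hg]
    exact hyp f hf hb

theorem exists_circulation_le_of_forall_one_le_integral
    (hyp : ∀ f : J → ℝ, Measurable f → (∃ C, ∀ x, |f x| ≤ C) →
      1 ≤ ∫ p, max (1 + (f p.1 - f p.2)) 0 ∂ψ) :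
    ∃ η : Measure (J × J), η.fst = η.snd ∧ η univ = 1 ∧ η ≤ ψ := by
  obtain ⟨h, hK, h1, hP⟩ := exists_mem_inner_eq_one_mem_orthogonal
    (isCompact_toWeakSpace_image (isBounded_Icc_zero_const_one (p := 2) ψ) isClosed_Icc
      (convex_Icc_zero_const_one ψ)) (convex_Icc_zero_const_one ψ)
    (zero_mem_Icc_zero_const_one ψ) _ (potentials ψ)
    (exists_mem_Icc_one_le_inner_const_one_add ψ hyp)
  have h01 := (mem_Icc_zero_const_one_iff ψ).1 hK
  have h0 : 0 ≤ᵐ[ψ] h := h01.mono fun p hp => hp.1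
  refine ⟨ψ.withDensity fun p => ENNReal.ofReal (h p), ?_, ?_, ?_⟩
  · ext B hB
    rw [Measure.fst_apply hB, Measure.snd_apply hB,
      withDensity_apply_eq_ofReal_inner ψ h0 (measurable_fst hB),
      withDensity_apply_eq_ofReal_inner ψ h0 (measurable_snd hB)]
    congr 1
    rw [← sub_eq_zero, ← inner_sub_left]
    exact (Submodule.mem_orthogonal _ h).1 hP _
      (indicatorConstLp_fst_sub_snd_mem_potentials ψ hB)
  · rw [withDensity_apply_eq_ofReal_inner ψ h0 MeasurableSet.univ, indicatorConstLp_univ, h1,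
      ENNReal.ofReal_one]
  · calc ψ.withDensity (fun p => ENNReal.ofReal (h p)) ≤ ψ.withDensity 1 :=
          withDensity_mono (h01.mono fun p hp => ENNReal.ofReal_le_one.2 hp.2)
      _ = ψ := withDensity_one

end Circulation

section Necessity

variable {J : Type*} [MeasurableSpace J]

theorem integral_sub_eq_zero_of_fst_eq_snd {η : Measure (J × J)} [IsFiniteMeasure η]
    (hη : η.fst = η.snd) {f : J → ℝ} (hf : Measurable f) {C : ℝ} (hC : ∀ x, |f x| ≤ C) :
    ∫ p, (f p.1 - f p.2) ∂η = 0 := by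
  have hfi : ∀ g : J × J → J, Measurable g → Integrable (fun p => f (g p)) η := fun g hg =>
    Integrable.of_bound (hf.comp hg).aestronglyMeasurable C (ae_of_all _ fun p => hC (g p))
  rw [integral_sub (hfi _ measurable_fst) (hfi _ measurable_snd),
    ← integral_map measurable_fst.aemeasurable hf.aestronglyMeasurable,
    ← integral_map measurable_snd.aemeasurable hf.aestronglyMeasurable]
  exact sub_eq_zero.2 (congrArg (fun ν => ∫ x, f x ∂ν) hη)

theorem one_le_integral_of_circulation_le {ψ η : Measure (J × J)} [IsFiniteMeasure ψ]
    (hfs : η.fst = η.snd) (huniv : η univ = 1) (hle : η ≤ ψ) {f : J → ℝ} (hf : Measurable f)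
    {C : ℝ} (hC : ∀ x, |f x| ≤ C) :
    1 ≤ ∫ p, max (1 + (f p.1 - f p.2)) 0 ∂ψ := by
  have : IsFiniteMeasure η := ⟨by simp [huniv]⟩
  have hpot : ∀ p : J × J, |f p.1 - f p.2| ≤ C + C := fun p =>
    (abs_sub _ _).trans (add_le_add (hC _) (hC _))
  have hm : Measurable fun p : J × J => f p.1 - f p.2 :=
    (hf.comp measurable_fst).sub (hf.comp measurable_snd)
  have hpoti : ∀ (ν : Measure (J × J)) [IsFiniteMeasure ν],
      Integrable (fun p => f p.1 - f p.2) ν := fun _ _ =>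
    Integrable.of_bound hm.aestronglyMeasurable (C + C) (ae_of_all _ hpot)
  have hint : ∀ (ν : Measure (J × J)) [IsFiniteMeasure ν],
      Integrable (fun p => 1 + (f p.1 - f p.2)) ν := fun ν _ =>
    (integrable_const 1).add (hpoti ν)
  calc 1 = ∫ p, (1 + (f p.1 - f p.2)) ∂η := by
        rw [integral_add (integrable_const 1) (hpoti η),
          integral_sub_eq_zero_of_fst_eq_snd hfs hf hC]
        simp [measureReal_def, huniv]
    _ ≤ ∫ p, max (1 + (f p.1 - f p.2)) 0 ∂η :=
        integral_mono (hint η) ((hint ψ).pos_part.mono_measure hle)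
          fun p => le_max_left _ _
    _ ≤ ∫ p, max (1 + (f p.1 - f p.2)) 0 ∂ψ :=
        integral_mono_measure hle (ae_of_all _ fun p => le_max_right _ _)
          (hint ψ).pos_part

end Necessity

theorem stmt_2_general {J : Type*} [MeasurableSpace J]
    (ψ : Measure (J × J)) [IsFiniteMeasure ψ] :
    (∃ η : Measure (J × J), η.fst = η.snd ∧ η univ = 1 ∧ η ≤ ψ) ↔
      (∀ f : J → ℝ, Measurable f → (∃ C, ∀ x, |f x| ≤ C) →
        1 ≤ ∫ p, max (1 + (f p.1 - f p.2)) 0 ∂ψ) :=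
  ⟨fun ⟨_, hfs, huniv, hle⟩ _ hf ⟨_, hC⟩ => one_le_integral_of_circulation_le hfs huniv hle hf hC,
    exists_circulation_le_of_forall_one_le_integral ψ⟩

/-- **Existence of ergodic circulations dominated by a capacity.**
There is a nonnegative circulation `η` on `J × J` with `η(J × J) = 1` and `η ≤ ψ` iff
`∫ (1 + F)₊ dψ ≥ 1` for every potential `F(x,y) = f(x) - f(y)` with `f` bounded measurable. -/
theorem stmt_2 {J : Type*} [MeasurableSpace J] [StandardBorelSpace J]
    (ψ : Measure (J × J)) [IsFiniteMeasure ψ] :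
    (∃ η : Measure (J × J), η.fst = η.snd ∧ η univ = 1 ∧ η ≤ ψ) ↔
      (∀ f : J → ℝ, Measurable f → (∃ C, ∀ x, |f x| ≤ C) →
        1 ≤ ∫ p, max (1 + (f p.1 - f p.2)) 0 ∂ψ) :=
  stmt_2_general ψ
end

section
/- Let (J, 𝒜) be a standard Borel space and let ψ be a finite nonnegative Borel measure on J × J. There exists a nonnegative circulation η on J × J with η(J × J) = 1 and η ≤ ψ if and only if for every partition J = S₁ ∪ ⋯ ∪ S_k of J into finitely many pairwise disjoint Borel sets one has Σ_{1 ≤ i ≤ j ≤ k} (j − i + 1) · ψ(S_j × S_i) ≥ 1. -/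
/-!
Necessity: if `η ≤ ψ` is a circulation of mass one and `ℓ x` is the index of the part
containing `x`, then `1 + ℓ x - ℓ y ≤ max (1 + ℓ x - ℓ y) 0`; the left side integrates to
`η (J × J) = 1` against `η` because the two marginals of `η` agree, and the right side integrates
to the partition sum against `ψ ≥ η`.

Sufficiency is a duality argument. The finitely additive set functions `0 ≤ m ≤ ψ` form a compact
convex set for the product topology, and each of them is countably additive because `ψ` is. So if
there is no circulation, no such `m` has `m (J × J) ≥ 1` and balanced marginals; by compactness
finitely many balance constraints already fail, and Hahn–Banach turns them into a step function
`f` with `m (J × J) + ∫ f d(m₁ - m₂) < 1` for all `m`. Testing on `ψ` restricted to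
`{1 + f x - f y > 0}` gives `∫ max (1 + f x - f y) 0 dψ < 1`. Finally, for `θ` uniform in
`[0, 1)` the mean of `max (1 + ⌊f x + θ⌋ - ⌊f y + θ⌋) 0` is `max (1 + f x - f y) 0`, so for some
`θ` the level sets of `⌊f + θ⌋` form a partition whose sum is `< 1`.
-/

open MeasureTheory Set
open scoped ENNReal

lemma floor_add_eq_floor_add_indicator (x : ℝ) {θ : ℝ} (hθ : θ ∈ Ico (0 : ℝ) 1) :
    (⌊x + θ⌋ : ℝ) = ⌊x⌋ + (Ico (1 - Int.fract x) 1).indicator (fun _ => 1) θ := by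
  have hx : (⌊x⌋ : ℝ) + Int.fract x = x := Int.floor_add_fract x
  have := Int.fract_nonneg x
  by_cases h : 1 - Int.fract x ≤ θ
  · rw [indicator_of_mem (show θ ∈ Ico _ _ from ⟨h, hθ.2⟩), ← Int.cast_one, ← Int.cast_add,
      Int.floor_eq_iff.2]
    push_cast
    constructor <;> linarith [hθ.2, Int.fract_lt_one x]
  · rw [indicator_of_notMem fun h' => h h'.1, add_zero, Int.floor_eq_iff.2]
    constructor <;> linarith [hθ.1]

lemma integrableOn_floor_add (x : ℝ) :
    IntegrableOn (fun θ : ℝ => (⌊x + θ⌋ : ℝ)) (Ico 0 1) :=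
  IntegrableOn.congr_fun (((integrable_const (⌊x⌋ : ℝ)).add
      ((integrable_const (1 : ℝ)).indicator measurableSet_Ico)))
    (fun _ hθ => (floor_add_eq_floor_add_indicator x hθ).symm) measurableSet_Ico

lemma setIntegral_Ico_floor_add (x : ℝ) : ∫ θ in Ico (0 : ℝ) 1, (⌊x + θ⌋ : ℝ) = x := by
  have hδ := Int.fract_nonneg x
  rw [setIntegral_congr_fun measurableSet_Ico fun θ hθ => floor_add_eq_floor_add_indicator x hθ,
    integral_add (integrable_const _) ((integrable_const 1).indicator measurableSet_Ico),
    setIntegral_const, integral_indicator_const _ measurableSet_Ico,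
    measureReal_restrict_apply measurableSet_Ico,
    inter_eq_left.2 (Ico_subset_Ico (by linarith [Int.fract_lt_one x]) le_rfl),
    Real.volume_real_Ico_of_le zero_le_one, Real.volume_real_Ico_of_le (by linarith)]
  simp [Int.floor_add_fract]

lemma max_one_add_eq_of_mem_Icc (n : ℤ) {x : ℝ} (hx : x ∈ Icc (n : ℝ) (n + 1)) :
    max (1 + x) 0 =
      max (1 + (n : ℝ)) 0 + (x - n) * (max (2 + (n : ℝ)) 0 - max (1 + (n : ℝ)) 0) := by
  rcases le_or_gt (-1) n with hn | hn
  · have hn' : (-1 : ℝ) ≤ n := by exact_mod_cast hn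
    rw [max_eq_left (by linarith [hx.1]), max_eq_left (by linarith), max_eq_left (by linarith)]
    ring
  · have hn' : (n : ℝ) ≤ -2 := by exact_mod_cast (show n ≤ -2 by omega)
    rw [max_eq_right (by linarith [hx.2]), max_eq_right (by linarith), max_eq_right (by linarith)]
    ring

lemma floor_add_sub_floor_add_mem_Icc (s t θ : ℝ) :
    (⌊s + θ⌋ : ℝ) - ⌊t + θ⌋ ∈ Icc (⌊s - t⌋ : ℝ) (⌊s - t⌋ + 1) := by
  have h₁ := Int.le_floor_add (s - t) (t + θ)
  have h₂ := Int.le_floor_add_floor (s - t) (t + θ)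
  rw [show s - t + (t + θ) = s + θ by ring] at h₁ h₂
  constructor
  · exact_mod_cast (by omega : ⌊s - t⌋ ≤ ⌊s + θ⌋ - ⌊t + θ⌋)
  · exact_mod_cast (by omega : ⌊s + θ⌋ - ⌊t + θ⌋ ≤ ⌊s - t⌋ + 1)

-- `⌊s + θ⌋ - ⌊t + θ⌋` only takes the values `⌊s - t⌋` and `⌊s - t⌋ + 1`, between which
-- `max (1 + ·) 0` is affine, so averaging over `θ` commutes with it.
lemma setIntegral_Ico_max_one_add_floor_sub_floor (s t : ℝ) :
    ∫ θ in Ico (0 : ℝ) 1, max (1 + ((⌊s + θ⌋ : ℝ) - ⌊t + θ⌋)) 0 = max (1 + (s - t)) 0 := by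
  set n := ⌊s - t⌋
  set a := max (1 + (n : ℝ)) 0
  set b := max (2 + (n : ℝ)) 0 - a
  have hs := integrableOn_floor_add s
  have ht := integrableOn_floor_add t
  have hD : IntegrableOn (fun θ => (⌊s + θ⌋ : ℝ) - ⌊t + θ⌋) (Ico 0 1) := hs.sub ht
  have hX : IntegrableOn (fun θ => ((⌊s + θ⌋ : ℝ) - ⌊t + θ⌋) - n) (Ico 0 1) :=
    hD.sub (integrable_const _)
  calc ∫ θ in Ico (0 : ℝ) 1, max (1 + ((⌊s + θ⌋ : ℝ) - ⌊t + θ⌋)) 0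
      = ∫ θ in Ico (0 : ℝ) 1, (a + (((⌊s + θ⌋ : ℝ) - ⌊t + θ⌋) - n) * b) :=
        integral_congr_ae (Filter.Eventually.of_forall fun θ =>
          max_one_add_eq_of_mem_Icc n (floor_add_sub_floor_add_mem_Icc s t θ))
    _ = a + ((s - t) - n) * b := by
        rw [integral_add (integrable_const a) (hX.mul_const b), integral_mul_const,
          integral_sub hD (integrable_const _), integral_sub hs ht,
          setIntegral_Ico_floor_add, setIntegral_Ico_floor_add]
        simp
    _ = max (1 + (s - t)) 0 :=
        (max_one_add_eq_of_mem_Icc n ⟨Int.floor_le _, (Int.lt_floor_add_one _).le⟩).symm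

lemma setLIntegral_Ico_ofReal_one_add_floor_sub_floor (s t : ℝ) :
    ∫⁻ θ in Ico (0 : ℝ) 1, ENNReal.ofReal (1 + ((⌊s + θ⌋ : ℝ) - ⌊t + θ⌋)) =
      ENNReal.ofReal (1 + (s - t)) := by
  have hint : IntegrableOn (fun θ => 1 + ((⌊s + θ⌋ : ℝ) - ⌊t + θ⌋)) (Ico 0 1) :=
    (integrable_const 1).add ((integrableOn_floor_add s).sub (integrableOn_floor_add t))
  have h : ∀ y : ℝ, ENNReal.ofReal y = ENNReal.ofReal (max y 0) := by simp
  rw [h (1 + (s - t)), ← setIntegral_Ico_max_one_add_floor_sub_floor,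
    ofReal_integral_eq_lintegral_ofReal hint.pos_part
      (Filter.Eventually.of_forall fun _ => le_max_right _ _)]
  simp_rw [← h]

lemma exists_lintegral_ofReal_one_add_floor_sub_floor_lt {α : Type*} [MeasurableSpace α]
    {ν : Measure (α × α)} [SFinite ν] {f : α → ℝ} (hf : Measurable f) {c : ℝ≥0∞}
    (h : ∫⁻ p, ENNReal.ofReal (1 + (f p.1 - f p.2)) ∂ν < c) :
    ∃ θ : ℝ, ∫⁻ p, ENNReal.ofReal (1 + ((⌊f p.1 + θ⌋ : ℝ) - ⌊f p.2 + θ⌋)) ∂ν < c := by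
  have : IsProbabilityMeasure (volume.restrict (Ico (0 : ℝ) 1)) := ⟨by simp⟩
  have hF : Measurable fun q : ℝ × (α × α) =>
      ENNReal.ofReal (1 + ((⌊f q.2.1 + q.1⌋ : ℝ) - ⌊f q.2.2 + q.1⌋)) := by
    fun_prop
  obtain ⟨θ, hθ⟩ := exists_le_lintegral (μ := volume.restrict (Ico (0 : ℝ) 1))
    (hF.lintegral_prod_right' (ν := ν)).aemeasurable
  refine ⟨θ, hθ.trans_lt ?_⟩
  rw [lintegral_lintegral_swap hF.aemeasurable]
  simpa only [setLIntegral_Ico_ofReal_one_add_floor_sub_floor] using h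

lemma exists_weights_of_isCompact {ι : Type*} [Fintype ι] {K : Set (ℝ × (ι → ℝ))}
    (hK : IsCompact K) (hKc : Convex ℝ K) (h0 : 0 ∈ K) (h : ∀ p ∈ K, p.2 = 0 → p.1 < 1) :
    ∃ w : ι → ℝ, ∀ p ∈ K, p.1 + ∑ i, w i * p.2 i < 1 := by
  classical
  have hdisj : Disjoint K (Ici 1 ×ˢ {0}) :=
    disjoint_left.2 fun p hp hpL => (h p hp hpL.2).not_ge hpL.1
  obtain ⟨ℓ, u, v, hℓK, huv, hℓL⟩ := geometric_hahn_banach_compact_closed hKc hK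
    ((convex_Ici 1).prod (convex_singleton 0)) (isClosed_Ici.prod isClosed_singleton) hdisj
  set c := ℓ (1, 0)
  have hvc : v < c := hℓL (1, 0) ⟨mem_Ici.2 le_rfl, rfl⟩
  have hc : 0 < c := by linarith [map_zero ℓ ▸ hℓK 0 h0]
  set e : ι → ℝ × (ι → ℝ) := fun i => (0, fun j => if i = j then 1 else 0)
  have hℓ : ∀ p : ℝ × (ι → ℝ), ℓ p = p.1 * c + ∑ i, p.2 i * ℓ (e i) := by
    intro p
    have h₁ : ℓ (p.1, 0) = p.1 * c := by
      rw [← smul_eq_mul, ← map_smul, Prod.smul_mk, smul_zero, smul_eq_mul, mul_one]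
    have h₂ := LinearMap.pi_apply_eq_sum_univ
      (ℓ.toLinearMap.comp (LinearMap.inr ℝ ℝ (ι → ℝ))) p.2
    simp only [LinearMap.comp_apply, LinearMap.inr_apply, ContinuousLinearMap.coe_coe,
      smul_eq_mul] at h₂
    calc ℓ p = ℓ (p.1, 0) + ℓ (0, p.2) := by rw [← map_add, Prod.mk_add_mk, add_zero, zero_add]
      _ = _ := by rw [h₁, h₂]
  refine ⟨fun i => ℓ (e i) / c, fun p hp => ?_⟩
  have hlt : ℓ p < c := (hℓK p hp).trans (huv.trans hvc)
  rw [hℓ] at hlt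
  calc p.1 + ∑ i, ℓ (e i) / c * p.2 i = (p.1 * c + ∑ i, p.2 i * ℓ (e i)) / c := by
        rw [add_div, mul_div_cancel_right₀ _ hc.ne', Finset.sum_div]
        congr 1
        exact Finset.sum_congr rfl fun i _ => by ring
    _ < 1 := (div_lt_one hc).2 hlt

lemma exists_finset_weights_of_isCompact {E ι : Type*} [AddCommGroup E] [Module ℝ E]
    [TopologicalSpace E] {K : Set E} (hK : IsCompact K) (hKc : Convex ℝ K) (h0 : 0 ∈ K)
    (φ₀ : E →L[ℝ] ℝ) (φ : ι → E →L[ℝ] ℝ) (h : ∀ x ∈ K, 1 ≤ φ₀ x → ∃ i, φ i x ≠ 0) :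
    ∃ (s : Finset ι) (w : ι → ℝ), ∀ x ∈ K, φ₀ x + ∑ i ∈ s, w i * φ i x < 1 := by
  classical
  have hK₁ : IsCompact (K ∩ {x | 1 ≤ φ₀ x}) :=
    hK.inter_right (isClosed_le continuous_const φ₀.continuous)
  obtain ⟨s, hs⟩ := hK₁.elim_finite_subfamily_closed (fun i => {x | φ i x = 0})
    (fun i => isClosed_eq (φ i).continuous continuous_const) <| by
      refine eq_empty_of_forall_notMem fun x ⟨⟨hxK, hx1⟩, hx⟩ => ?_
      obtain ⟨i, hi⟩ := h x hxK hx1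
      exact hi (mem_iInter.1 hx i)
  let G : E →L[ℝ] ℝ × (s → ℝ) := φ₀.prod (ContinuousLinearMap.pi fun i : s => φ i)
  obtain ⟨w, hw⟩ := exists_weights_of_isCompact (hK.image G.continuous)
    (hKc.linear_image G.toLinearMap) ⟨0, h0, map_zero G⟩ <| by
      rintro _ ⟨x, hx, rfl⟩ hx0
      by_contra! hx1
      have hmem : x ∈ (K ∩ {x | 1 ≤ φ₀ x}) ∩ ⋂ i ∈ s, {x | φ i x = 0} :=
        ⟨⟨hx, hx1⟩, mem_iInter₂.2 fun i hi => congrFun hx0 ⟨i, hi⟩⟩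
      rwa [hs] at hmem
  refine ⟨s, fun i => if hi : i ∈ s then w ⟨i, hi⟩ else 0, fun x hx => ?_⟩
  rw [← Finset.sum_coe_sort s]
  simpa [G] using hw (G x) ⟨x, hx, rfl⟩

lemma ofReal_integral_le_lintegral_ofReal {α : Type*} [MeasurableSpace α] {μ : Measure α}
    {f : α → ℝ} (hf : Integrable f μ) :
    ENNReal.ofReal (∫ x, f x ∂μ) ≤ ∫⁻ x, ENNReal.ofReal (f x) ∂μ :=
  calc ENNReal.ofReal (∫ x, f x ∂μ) ≤ ENNReal.ofReal (∫ x, max (f x) 0 ∂μ) :=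
        ENNReal.ofReal_le_ofReal (integral_mono hf hf.pos_part fun _ => le_max_left _ _)
    _ = ∫⁻ x, ENNReal.ofReal (f x) ∂μ := by
        rw [ofReal_integral_eq_lintegral_ofReal hf.pos_part
          (Filter.Eventually.of_forall fun _ => le_max_right _ _)]
        simp

noncomputable def indicatorSum {α ι : Type*} (s : Finset ι) (A : ι → Set α) (w : ι → ℝ)
    (x : α) : ℝ :=
  ∑ i ∈ s, (A i).indicator (fun _ => w i) x

lemma abs_indicatorSum_le {α ι : Type*} (s : Finset ι) (A : ι → Set α) (w : ι → ℝ) (x : α) :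
    |indicatorSum s A w x| ≤ ∑ i ∈ s, |w i| :=
  (Finset.abs_sum_le_sum_abs _ _).trans <| Finset.sum_le_sum fun i _ => by
    by_cases hx : x ∈ A i <;> simp [hx]

section DominatedContents

variable {α : Type*} [MeasurableSpace α]

-- The bounds are imposed on all sets, measurable or not, so that Tychonoff applies.
def dominatedContents (ψ : Measure α) : Set (Set α → ℝ) :=
  {m | (∀ s, m s ∈ Icc 0 (ψ.real s)) ∧
    ∀ s t, MeasurableSet s → MeasurableSet t → Disjoint s t → m (s ∪ t) = m s + m t}

lemma isCompact_dominatedContents (ψ : Measure α) : IsCompact (dominatedContents ψ) := by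
  refine (isCompact_univ_pi fun s => isCompact_Icc (a := 0) (b := ψ.real s)).of_isClosed_subset
    ?_ fun m hm s _ => hm.1 s
  rw [dominatedContents, ofPred_and]
  refine IsClosed.inter ?_ ?_
  · rw [ofPred_forall]
    exact isClosed_iInter fun s => isClosed_Icc.preimage (continuous_apply s)
  · simp only [ofPred_forall]
    exact isClosed_iInter fun s => isClosed_iInter fun t => isClosed_iInter fun _ =>
      isClosed_iInter fun _ => isClosed_iInter fun _ =>
        isClosed_eq (continuous_apply _) ((continuous_apply s).add (continuous_apply t))

lemma convex_dominatedContents (ψ : Measure α) : Convex ℝ (dominatedContents ψ) := by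
  rintro m ⟨hm, hm'⟩ n ⟨hn, hn'⟩ a b ha hb hab
  refine ⟨fun s => ⟨?_, ?_⟩, fun s t hs ht hst => ?_⟩
  · simp only [Pi.add_apply, Pi.smul_apply, smul_eq_mul]
    nlinarith [(hm s).1, (hn s).1]
  · have hψ : a * ψ.real s + b * ψ.real s = ψ.real s := by rw [← add_mul, hab, one_mul]
    simp only [Pi.add_apply, Pi.smul_apply, smul_eq_mul]
    nlinarith [mul_le_mul_of_nonneg_left (hm s).2 ha, mul_le_mul_of_nonneg_left (hn s).2 hb]
  · simp only [Pi.add_apply, Pi.smul_apply, smul_eq_mul, hm' s t hs ht hst, hn' s t hs ht hst]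
    ring

lemma measureReal_mem_dominatedContents {ψ ν : Measure α} [IsFiniteMeasure ψ]
    [IsFiniteMeasure ν] (h : ν ≤ ψ) : (fun s => ν.real s) ∈ dominatedContents ψ :=
  ⟨fun s => ⟨measureReal_nonneg,
      ENNReal.toReal_mono (measure_ne_top ψ s) (Measure.le_iff'.1 h s)⟩,
    fun _ _ _ ht hst => measureReal_union hst ht⟩

lemma exists_measure_eq_of_additive_le (ψ : Measure α) [IsFiniteMeasure ψ] (m : Set α → ℝ≥0∞)
    (hle : ∀ s, MeasurableSet s → m s ≤ ψ s)
    (hadd : ∀ s t, MeasurableSet s → MeasurableSet t → Disjoint s t → m (s ∪ t) = m s + m t) :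
    ∃ μ : Measure α, (∀ s, MeasurableSet s → μ s = m s) ∧ μ ≤ ψ := by
  have hC : IsSetRing {s : Set α | MeasurableSet s} :=
    ⟨MeasurableSet.empty, fun _ _ => .union, fun _ _ => .diff⟩
  have hempty : m ∅ = 0 := le_zero_iff.1 ((hle ∅ .empty).trans_eq measure_empty)
  let c := hC.addContent_of_union m hempty fun hs ht hst => hadd _ _ hs ht hst
  -- `m` is continuous at `∅` because `ψ` is
  have hσ := addContent_iUnion_eq_sum_of_tendsto_zero hC c
    (fun s hs => ne_top_of_le_ne_top (measure_ne_top ψ s) (hle s hs))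
    fun s hs hanti hs0 => by
      refine tendsto_of_tendsto_of_tendsto_of_le_of_le tendsto_const_nhds ?_
        (fun _ => bot_le) fun n => hle _ (hs n)
      simpa [hs0, Function.comp_def] using tendsto_measure_iInter_atTop (μ := ψ)
        (fun n => (hs n).nullMeasurableSet) hanti ⟨0, measure_ne_top ψ _⟩
  refine ⟨Measure.ofMeasurable (fun s _ => m s) hempty fun f hf hdisj =>
    hσ hf (.iUnion hf) hdisj, fun s hs => Measure.ofMeasurable_apply s hs, ?_⟩
  exact Measure.le_iff.2 fun s hs => (Measure.ofMeasurable_apply s hs).trans_le (hle s hs)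

lemma measurable_indicatorSum {ι : Type*} {s : Finset ι} {A : ι → Set α}
    (hA : ∀ i, MeasurableSet (A i)) (w : ι → ℝ) : Measurable (indicatorSum s A w) :=
  Finset.measurable_sum _ fun i _ => measurable_const.indicator (hA i)

lemma integrable_indicatorSum {ι : Type*} {s : Finset ι} {A : ι → Set α}
    (hA : ∀ i, MeasurableSet (A i)) (w : ι → ℝ) (μ : Measure α) [IsFiniteMeasure μ] :
    Integrable (indicatorSum s A w) μ :=
  integrable_finsetSum _ fun i _ => (integrable_const (w i)).indicator (hA i)

lemma integral_indicatorSum {ι : Type*} {s : Finset ι} {A : ι → Set α}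
    (hA : ∀ i, MeasurableSet (A i)) (w : ι → ℝ) (μ : Measure α) [IsFiniteMeasure μ] :
    ∫ x, indicatorSum s A w x ∂μ = ∑ i ∈ s, w i * μ.real (A i) := by
  unfold indicatorSum
  rw [integral_finsetSum _ fun i _ => (integrable_const (w i)).indicator (hA i)]
  simp_rw [integral_indicator_const _ (hA _), smul_eq_mul, mul_comm]

end DominatedContents

section Circulation

variable {J : Type*} [MeasurableSpace J]

lemma exists_circulation_of_le {ψ μ : Measure (J × J)} [IsFiniteMeasure ψ]
    (hμ : μ.fst = μ.snd) (h1 : 1 ≤ μ univ) (hle : μ ≤ ψ) :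
    ∃ η : Measure (J × J), η.fst = η.snd ∧ η univ = 1 ∧ η ≤ ψ := by
  have hfin : μ univ ≠ ∞ :=
    ne_top_of_le_ne_top (measure_ne_top ψ univ) (Measure.le_iff'.1 hle univ)
  refine ⟨(μ univ)⁻¹ • μ, ?_, ?_, Measure.le_iff'.2 fun s => ?_⟩
  · simp only [Measure.fst, Measure.snd, Measure.map_smul] at hμ ⊢
    rw [hμ]
  · rw [Measure.smul_apply, smul_eq_mul, ENNReal.inv_mul_cancel (one_pos.trans_le h1).ne' hfin]
  · calc ((μ univ)⁻¹ • μ) s = (μ univ)⁻¹ * μ s := rfl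
      _ ≤ 1 * μ s := by gcongr; exact ENNReal.inv_le_one.2 h1
      _ ≤ ψ s := by rw [one_mul]; exact Measure.le_iff'.1 hle s

lemma exists_circulation_of_mem_dominatedContents {ψ : Measure (J × J)} [IsFiniteMeasure ψ]
    {m : Set (J × J) → ℝ} (hm : m ∈ dominatedContents ψ) (h1 : 1 ≤ m univ)
    (hbal : ∀ A, MeasurableSet A → m (Prod.fst ⁻¹' A) = m (Prod.snd ⁻¹' A)) :
    ∃ η : Measure (J × J), η.fst = η.snd ∧ η univ = 1 ∧ η ≤ ψ := by
  obtain ⟨μ, hμm, hμψ⟩ := exists_measure_eq_of_additive_le ψ (fun s => ENNReal.ofReal (m s))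
    (fun s _ => ENNReal.ofReal_le_of_le_toReal (hm.1 s).2) fun s t hs ht hst => by
      rw [hm.2 s t hs ht hst, ENNReal.ofReal_add (hm.1 s).1 (hm.1 t).1]
  refine exists_circulation_of_le ?_ ?_ hμψ
  · ext A hA
    rw [Measure.fst_apply hA, Measure.snd_apply hA, hμm _ (measurable_fst hA),
      hμm _ (measurable_snd hA), hbal A hA]
  · rw [hμm _ .univ]
    exact ENNReal.one_le_ofReal.2 h1

lemma integrable_one_add_sub {ν : Measure (J × J)} [IsFiniteMeasure ν] {h : J → ℝ}
    (h₁ : Integrable h ν.fst) (h₂ : Integrable h ν.snd) :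
    Integrable (fun p => 1 + (h p.1 - h p.2)) ν :=
  (integrable_const 1).add ((h₁.comp_measurable measurable_fst).sub
    (h₂.comp_measurable measurable_snd))

lemma integral_one_add_sub {ν : Measure (J × J)} [IsFiniteMeasure ν] {h : J → ℝ}
    (h₁ : Integrable h ν.fst) (h₂ : Integrable h ν.snd) :
    ∫ p, (1 + (h p.1 - h p.2)) ∂ν = ν.real univ + (∫ x, h x ∂ν.fst - ∫ x, h x ∂ν.snd) := by
  have h₁' : Integrable (fun p : J × J => h p.1) ν := h₁.comp_measurable measurable_fst
  have h₂' : Integrable (fun p : J × J => h p.2) ν := h₂.comp_measurable measurable_snd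
  have hsub : Integrable (fun p : J × J => h p.1 - h p.2) ν := h₁'.sub h₂'
  rw [integral_add (integrable_const 1) hsub, integral_sub h₁' h₂', Measure.fst, Measure.snd,
    integral_map measurable_fst.aemeasurable h₁.aestronglyMeasurable,
    integral_map measurable_snd.aemeasurable h₂.aestronglyMeasurable]
  simp

lemma lintegral_ofReal_one_add_indicatorSum_sub_lt_one {ψ : Measure (J × J)}
    [IsFiniteMeasure ψ]
    {ι : Type*} {s : Finset ι} {A : ι → Set J} (hA : ∀ i, MeasurableSet (A i)) {w : ι → ℝ}
    (hw : ∀ m ∈ dominatedContents ψ,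
      m univ + ∑ i ∈ s, w i * (m (Prod.fst ⁻¹' A i) - m (Prod.snd ⁻¹' A i)) < 1) :
    ∫⁻ p, ENNReal.ofReal (1 + (indicatorSum s A w p.1 - indicatorSum s A w p.2)) ∂ψ < 1 := by
  set f := indicatorSum s A w
  set P := {p : J × J | 0 < 1 + (f p.1 - f p.2)}
  have hP : MeasurableSet P := measurableSet_lt measurable_const (by
    have := measurable_indicatorSum (s := s) hA w
    fun_prop)
  set ν := ψ.restrict P
  have hν : ∫ p, (1 + (f p.1 - f p.2)) ∂ν < 1 := by
    rw [integral_one_add_sub (integrable_indicatorSum hA w _) (integrable_indicatorSum hA w _),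
      integral_indicatorSum hA, integral_indicatorSum hA, ← Finset.sum_sub_distrib]
    convert hw _ (measureReal_mem_dominatedContents (Measure.restrict_le_self (s := P))) using 3
      with i
    rw [mul_sub, measureReal_def, measureReal_def, Measure.fst_apply (hA i),
      Measure.snd_apply (hA i)]
    rfl
  have hsupp : (fun p => ENNReal.ofReal (1 + (f p.1 - f p.2))).support ⊆ P := fun p hp =>
    ENNReal.ofReal_pos.1 (pos_iff_ne_zero.2 hp)
  rw [← setLIntegral_eq_of_support_subset hsupp, ← ofReal_integral_eq_lintegral_ofReal
    (integrable_one_add_sub (integrable_indicatorSum hA w _) (integrable_indicatorSum hA w _))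
    (ae_restrict_of_forall_mem hP fun p hp => hp.le)]
  exact ENNReal.ofReal_lt_one.2 hν

noncomputable def partitionWeight (ψ : Measure (J × J)) {k : ℕ} (S : Fin k → Set J) : ℝ≥0∞ :=
  ∑ i : Fin k, ∑ j : Fin k,
    if (i : ℕ) ≤ (j : ℕ) then (((j : ℕ) - (i : ℕ) + 1 : ℕ) : ℝ≥0∞) * ψ (S j ×ˢ S i) else 0

lemma ite_natCast_mul_eq_ofReal_mul (i j : ℕ) (a : ℝ≥0∞) :
    (if i ≤ j then ((j - i + 1 : ℕ) : ℝ≥0∞) * a else 0) =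
      ENNReal.ofReal (1 + ((j : ℝ) - i)) * a := by
  split_ifs with h
  · rw [← ENNReal.ofReal_natCast]
    push_cast [h]
    ring_nf
  · rw [ENNReal.ofReal_of_nonpos, zero_mul]
    have : (j : ℝ) + 1 ≤ i := by exact_mod_cast (by omega : j + 1 ≤ i)
    linarith

lemma lintegral_ofReal_one_add_sub_eq_partitionWeight (ψ : Measure (J × J)) {k : ℕ}
    {ℓ : J → Fin k} (hℓ : Measurable ℓ) :
    ∫⁻ p, ENNReal.ofReal (1 + (((ℓ p.1 : ℕ) : ℝ) - (ℓ p.2 : ℕ))) ∂ψ =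
      partitionWeight ψ fun i => ℓ ⁻¹' {i} := by
  set F : Fin k × Fin k → ℝ≥0∞ := fun q =>
    ENNReal.ofReal (1 + (((q.1 : ℕ) : ℝ) - (q.2 : ℕ)))
  have hκ : Measurable fun p : J × J => (ℓ p.1, ℓ p.2) := by fun_prop
  calc ∫⁻ p, F (ℓ p.1, ℓ p.2) ∂ψ
      = ∫⁻ q, F q ∂ψ.map fun p => (ℓ p.1, ℓ p.2) :=
        (lintegral_map (measurable_of_countable F) hκ).symm
    _ = ∑ q, F q * ψ ((ℓ ⁻¹' {q.1}) ×ˢ (ℓ ⁻¹' {q.2})) := by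
        rw [lintegral_fintype]
        refine Finset.sum_congr rfl fun q _ => ?_
        rw [Measure.map_apply hκ (measurableSet_singleton q)]
        congr 2
        ext p
        simp [Prod.ext_iff]
    _ = partitionWeight ψ fun i => ℓ ⁻¹' {i} := by
        rw [partitionWeight, Fintype.sum_prod_type, Finset.sum_comm]
        simp_rw [ite_natCast_mul_eq_ofReal_mul, F]

lemma exists_measurable_eq_preimage_singleton {k : ℕ} {S : Fin k → Set J}
    (hmeas : ∀ i, MeasurableSet (S i))
    (hdisj : ∀ i j, i ≠ j → Disjoint (S i) (S j)) (hcover : (⋃ i, S i) = univ) :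
    ∃ ℓ : J → Fin k, Measurable ℓ ∧ S = fun i => ℓ ⁻¹' {i} := by
  have hmem : ∀ x, ∃ i, x ∈ S i := fun x => mem_iUnion.1 (hcover ▸ mem_univ x)
  choose ℓ hℓ using hmem
  have hS : S = fun i => ℓ ⁻¹' {i} := by
    ext i x
    refine ⟨fun hx => ?_, fun hx => (show ℓ x = i from hx) ▸ hℓ x⟩
    by_contra h
    exact (hdisj _ _ h).le_bot ⟨hℓ x, hx⟩
  refine ⟨ℓ, measurable_to_countable' fun i => ?_, hS⟩
  rw [← congrFun hS i]
  exact hmeas i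

lemma exists_measurable_fin_sub_eq_floor_sub {g : J → ℝ} (hg : Measurable g) {C : ℝ}
    (hC : ∀ x, |g x| ≤ C) :
    ∃ (k : ℕ) (ℓ : J → Fin k), Measurable ℓ ∧
      ∀ x y, ((ℓ x : ℕ) : ℝ) - (ℓ y : ℕ) = (⌊g x⌋ : ℝ) - ⌊g y⌋ := by
  set M : ℕ := ⌈C⌉₊ + 1
  have hbound : ∀ x, 0 ≤ ⌊g x⌋ + M ∧ ⌊g x⌋ + M < 2 * M + 1 := by
    intro x
    have hx := abs_le.1 (hC x)
    have hCM : C + 1 ≤ M := by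
      simp only [M]; push_cast; linarith [Nat.le_ceil C]
    constructor
    · have : -(M : ℝ) ≤ ⌊g x⌋ := by linarith [Int.sub_one_lt_floor (g x)]
      exact_mod_cast (by linarith : (0 : ℝ) ≤ ⌊g x⌋ + M)
    · have : (⌊g x⌋ : ℝ) < M := by linarith [Int.floor_le (g x)]
      exact_mod_cast (by linarith : (⌊g x⌋ : ℝ) + M < 2 * M + 1)
  refine ⟨2 * M + 1, fun x => Fin.ofNat _ (⌊g x⌋ + M).toNat, by fun_prop, fun x y => ?_⟩
  have hval : ∀ x,
      (((Fin.ofNat (2 * M + 1) (⌊g x⌋ + M).toNat : Fin _) : ℕ) : ℝ) = ⌊g x⌋ + M := by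
    intro x
    have := hbound x
    rw [Fin.val_ofNat, Nat.mod_eq_of_lt (by omega)]
    exact_mod_cast Int.toNat_of_nonneg this.1
  dsimp only
  rw [hval, hval]
  ring

lemma one_le_partitionWeight_of_circulation {ψ η : Measure (J × J)} [IsProbabilityMeasure η]
    (hη : η.fst = η.snd) (hle : η ≤ ψ) {k : ℕ} {S : Fin k → Set J}
    (hmeas : ∀ i, MeasurableSet (S i)) (hdisj : ∀ i j, i ≠ j → Disjoint (S i) (S j))
    (hcover : (⋃ i, S i) = univ) : 1 ≤ partitionWeight ψ S := by
  obtain ⟨ℓ, hℓ, rfl⟩ := exists_measurable_eq_preimage_singleton hmeas hdisj hcover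
  have hint : Integrable (fun x => ((ℓ x : ℕ) : ℝ)) η.fst :=
    Integrable.of_bound (by fun_prop) k
      (Filter.Eventually.of_forall fun x => by simp [(ℓ x).isLt.le])
  calc 1 = ENNReal.ofReal (∫ p, (1 + (((ℓ p.1 : ℕ) : ℝ) - (ℓ p.2 : ℕ))) ∂η) := by
        rw [integral_one_add_sub hint (hη ▸ hint), hη, sub_self, add_zero, probReal_univ,
          ENNReal.ofReal_one]
    _ ≤ ∫⁻ p, ENNReal.ofReal (1 + (((ℓ p.1 : ℕ) : ℝ) - (ℓ p.2 : ℕ))) ∂η :=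
        ofReal_integral_le_lintegral_ofReal (integrable_one_add_sub hint (hη ▸ hint))
    _ ≤ ∫⁻ p, ENNReal.ofReal (1 + (((ℓ p.1 : ℕ) : ℝ) - (ℓ p.2 : ℕ))) ∂ψ :=
        lintegral_mono' hle le_rfl
    _ = partitionWeight ψ fun i => ℓ ⁻¹' {i} :=
        lintegral_ofReal_one_add_sub_eq_partitionWeight ψ hℓ

lemma exists_circulation_of_forall_one_le_partitionWeight {ψ : Measure (J × J)}
    [IsFiniteMeasure ψ]
    (hpart : ∀ (k : ℕ) (S : Fin k → Set J), (∀ i, MeasurableSet (S i)) →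
      (∀ i j, i ≠ j → Disjoint (S i) (S j)) → (⋃ i, S i) = univ → 1 ≤ partitionWeight ψ S) :
    ∃ η : Measure (J × J), η.fst = η.snd ∧ η univ = 1 ∧ η ≤ ψ := by
  by_contra hno
  let π : Set (J × J) → (Set (J × J) → ℝ) →L[ℝ] ℝ := ContinuousLinearMap.proj
  let φ : {A : Set J // MeasurableSet A} → (Set (J × J) → ℝ) →L[ℝ] ℝ := fun A =>
    π (Prod.fst ⁻¹' A.1) - π (Prod.snd ⁻¹' A.1)
  obtain ⟨s, w, hw⟩ := exists_finset_weights_of_isCompact (isCompact_dominatedContents ψ)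
    (convex_dominatedContents ψ)
    ⟨fun _ => ⟨le_rfl, measureReal_nonneg⟩, fun _ _ _ _ _ => (add_zero 0).symm⟩
    (π univ) φ fun m hm h1 => by
      by_contra! hbal
      exact hno (exists_circulation_of_mem_dominatedContents hm h1 fun A hA =>
        sub_eq_zero.1 (hbal ⟨A, hA⟩))
  have hf :=
    lintegral_ofReal_one_add_indicatorSum_sub_lt_one (A := Subtype.val) (fun A => A.2) hw
  set f := indicatorSum s Subtype.val w
  have hfm : Measurable f := measurable_indicatorSum (fun A => A.2) w
  obtain ⟨θ, hθ⟩ := exists_lintegral_ofReal_one_add_floor_sub_floor_lt hfm hf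
  obtain ⟨k, ℓ, hℓ, hℓf⟩ := exists_measurable_fin_sub_eq_floor_sub (g := fun x => f x + θ)
    (by fun_prop) fun x =>
      (abs_add_le _ _).trans (add_le_add_left (abs_indicatorSum_le _ _ _ x) _)
  have h1 := hpart k (fun i => ℓ ⁻¹' {i}) (fun i => hℓ (measurableSet_singleton i))
    (fun i j hij => (disjoint_singleton.2 hij).preimage ℓ)
    (by rw [← preimage_iUnion, iUnion_of_singleton, preimage_univ])
  rw [← lintegral_ofReal_one_add_sub_eq_partitionWeight ψ hℓ] at h1
  simp_rw [hℓf] at h1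
  exact h1.not_gt hθ

end Circulation

theorem stmt_4_general {J : Type*} [MeasurableSpace J]
    (ψ : Measure (J × J)) [IsFiniteMeasure ψ] :
    (∃ η : Measure (J × J), η.fst = η.snd ∧ η univ = 1 ∧ η ≤ ψ) ↔
      (∀ (k : ℕ) (S : Fin k → Set J),
        (∀ i, MeasurableSet (S i)) →
        (∀ i j, i ≠ j → Disjoint (S i) (S j)) →
        (⋃ i, S i) = univ →
        1 ≤ ∑ i : Fin k, ∑ j : Fin k,
          if (i : ℕ) ≤ (j : ℕ) then (((j : ℕ) - (i : ℕ) + 1 : ℕ) : ℝ≥0∞) * ψ (S j ×ˢ S i)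
          else 0) := by
  refine ⟨fun ⟨η, hη, h1, hle⟩ k S hmeas hdisj hcover => ?_,
    exists_circulation_of_forall_one_le_partitionWeight⟩
  have : IsProbabilityMeasure η := ⟨h1⟩
  exact one_le_partitionWeight_of_circulation hη hle hmeas hdisj hcover

/-- **Combinatorial form of the ergodic circulation existence condition.**
There is a nonnegative circulation `η` with `η(J × J) = 1` and `η ≤ ψ` iff for every partition
`J = S₁ ∪ ⋯ ∪ S_k` into finitely many pairwise disjoint Borel sets,
`Σ_{i ≤ j} (j - i + 1) ψ(S_j × S_i) ≥ 1`. -/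
theorem stmt_4 {J : Type*} [MeasurableSpace J] [StandardBorelSpace J]
    (ψ : Measure (J × J)) [IsFiniteMeasure ψ] :
    (∃ η : Measure (J × J), η.fst = η.snd ∧ η univ = 1 ∧ η ≤ ψ) ↔
      (∀ (k : ℕ) (S : Fin k → Set J),
        (∀ i, MeasurableSet (S i)) →
        (∀ i j, i ≠ j → Disjoint (S i) (S j)) →
        (⋃ i, S i) = univ →
        1 ≤ ∑ i : Fin k, ∑ j : Fin k,
          if (i : ℕ) ≤ (j : ℕ) then (((j : ℕ) - (i : ℕ) + 1 : ℕ) : ℝ≥0∞) * ψ (S j ×ˢ S i)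
          else 0) :=
  stmt_4_general ψ
end

section
/- Let (J, 𝒜) be a standard Borel space, let ψ be a finite nonnegative Borel measure on J × J (the capacity), and let s, t ∈ J be distinct points. There exists an s-t flow φ of value 1 with φ ≤ ψ if and only if ψ(A × Aᶜ) ≥ 1 for every Borel set A ⊆ J with s ∈ A and t ∉ A. -/
/-!
A flow of value 1 below `ψ` is a measure `φ ≤ ψ` solving the linear constraints
`φ (A ×ˢ univ) - φ (univ ×ˢ A) = 𝟙_A s - 𝟙_A t`. The measures `φ ≤ ψ` form a weak-* compact
convex set of functionals on `L¹(ψ)` (Banach–Alaoglu), so by compactness and finite-dimensional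
Hahn–Banach separation the constraints are solvable as soon as, for every finite family of sets
`Aᵢ` and weights `cᵢ`, some `φ` makes `∑ cᵢ (constraint for Aᵢ)` nonnegative. With
`F = ∑ cᵢ 𝟙_{Aᵢ}`, the restriction of `ψ` to `{p | F p.2 < F p.1}` does it: by the layer-cake
formula, `∫ (F p.1 - F p.2)⁺ dψ` is the integral over levels `r` of the capacity of the cut
`{F > r}`, which is at least `1` for `r ∈ [F t, F s)`, hence the integral is at least `F s - F t`.
Conversely the net flow out of any `A ∋ s` with `t ∉ A` is `1`, so `ψ (A ×ˢ Aᶜ) ≥ 1`.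
-/

open MeasureTheory Set ENNReal Function

theorem mem_of_forall_exists_dotProduct_le {ι : Type*} [Fintype ι] {T : Set (ι → ℝ)}
    (hTc : IsClosed T) (hTv : Convex ℝ T) {p : ι → ℝ}
    (h : ∀ c : ι → ℝ, ∃ y ∈ T, c ⬝ᵥ p ≤ c ⬝ᵥ y) : p ∈ T := by
  classical
  by_contra hp
  obtain ⟨f, a, hfT, hfp⟩ := geometric_hahn_banach_closed_point hTv hTc hp
  set c : ι → ℝ := fun i => f fun j => if i = j then 1 else 0
  have hf : ∀ y, f y = c ⬝ᵥ y := fun y => by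
    simpa [dotProduct, mul_comm] using LinearMap.pi_apply_eq_sum_univ f.toLinearMap y
  obtain ⟨y, hyT, hy⟩ := h c
  linarith [hfT y hyT, hf y, hf p]

theorem exists_mem_forall_eq_of_isCompact_of_convex {E ι : Type*} [TopologicalSpace E]
    [AddCommGroup E] [Module ℝ E] {K : Set E} (hKc : IsCompact K) (hKv : Convex ℝ K)
    (ℓ : ι → StrongDual ℝ E) (d : ι → ℝ)
    (h : ∀ (u : Finset ι) (c : u → ℝ), ∃ x ∈ K, ∑ i, c i * d i ≤ ∑ i, c i * ℓ i x) :
    ∃ x ∈ K, ∀ i, ℓ i x = d i := by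
  by_contra! H
  have hempty : K ∩ ⋂ i, {x | ℓ i x = d i} = ∅ := by
    refine eq_empty_of_forall_notMem fun x ⟨hxK, hx⟩ => ?_
    obtain ⟨i, hi⟩ := H x hxK
    exact hi (mem_iInter.mp hx i)
  obtain ⟨u, hu⟩ := hKc.elim_finite_subfamily_closed _
    (fun i => isClosed_eq (ℓ i).continuous continuous_const) hempty
  set L : E →L[ℝ] (u → ℝ) := ContinuousLinearMap.pi fun i => ℓ i
  have hd : (fun i : u => d i) ∈ L '' K :=
    mem_of_forall_exists_dotProduct_le (hKc.image L.continuous).isClosed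
      (hKv.linear_image L.toLinearMap) fun c => by
        obtain ⟨x, hxK, hx⟩ := h u c
        exact ⟨L x, mem_image_of_mem L hxK, hx⟩
  obtain ⟨x, hxK, hx⟩ := hd
  have hxu : x ∈ K ∩ ⋂ i ∈ u, {x | ℓ i x = d i} :=
    ⟨hxK, mem_iInter₂.mpr fun i hi => congrFun hx ⟨i, hi⟩⟩
  rw [hu] at hxu
  exact hxu

section L1

variable {X : Type*} [MeasurableSpace X] {μ : Measure X}

section IndicatorLp

variable [IsFiniteMeasure μ] {E : Type*} [NormedAddCommGroup E] {p : ℝ≥0∞} (c : E)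

theorem indicatorConstLp_biUnion_finset {ι : Type*} {f : ι → Set X}
    (hf : ∀ i, MeasurableSet (f i)) (hd : Pairwise (Disjoint on f)) (s : Finset ι) :
    indicatorConstLp p (s.measurableSet_biUnion fun i _ => hf i) (measure_ne_top μ _) c
      = ∑ i ∈ s, indicatorConstLp p (hf i) (measure_ne_top μ _) c := by
  classical
  induction s using Finset.induction_on with
  | empty => simp
  | insert a s ha ih =>
    rw [Finset.sum_insert ha, ← ih, ← indicatorConstLp_disjoint_union]
    · simp only [Finset.set_biUnion_insert]
    · exact disjoint_iUnion₂_right.mpr fun i hi => hd (ne_of_mem_of_not_mem hi ha).symm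

theorem hasSum_indicatorConstLp [Fact (1 ≤ p)] (hp : p ≠ ∞) {ι : Type*} [Countable ι]
    {f : ι → Set X} (hf : ∀ i, MeasurableSet (f i)) (hd : Pairwise (Disjoint on f)) :
    HasSum (fun i => indicatorConstLp p (hf i) (measure_ne_top μ _) c)
      (indicatorConstLp p (MeasurableSet.iUnion hf) (measure_ne_top μ _) c) := by
  rw [HasSum, SummationFilter.unconditional_filter]
  simp_rw [← indicatorConstLp_biUnion_finset c hf hd]
  refine tendsto_indicatorConstLp_set hp ?_
  simp_rw [symmDiff_of_le (iUnion₂_subset fun i _ => subset_iUnion f i)]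
  set tail : Finset ι → Set X := fun s => (⋃ i, f i) \ ⋃ i ∈ s, f i
  have htail_empty : ⋂ s, tail s = ∅ := by
    refine eq_empty_of_forall_notMem fun x hx => ?_
    obtain ⟨i, hi⟩ := mem_iUnion.mp (mem_iInter.mp hx ∅).1
    exact (mem_iInter.mp hx {i}).2 (mem_biUnion (Finset.mem_singleton_self i) hi)
  have htail_meas : ∀ s, MeasurableSet (tail s) := fun s =>
    (MeasurableSet.iUnion hf).diff (s.measurableSet_biUnion fun i _ => hf i)
  simpa [comp_def, htail_empty] using tendsto_measure_iInter_atTop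
    (fun s => (htail_meas s).nullMeasurableSet)
    (fun s t hst => sdiff_subset_sdiff_right (biUnion_subset_biUnion_left hst))
    ⟨∅, measure_ne_top μ _⟩

variable (μ) in
noncomputable def indicatorL1 {B : Set X} (hB : MeasurableSet B) : Lp ℝ 1 μ :=
  indicatorConstLp 1 hB (measure_ne_top μ B) 1

theorem indicatorL1_coeFn {B : Set X} (hB : MeasurableSet B) :
    indicatorL1 μ hB =ᵐ[μ] B.indicator 1 :=
  indicatorConstLp_coeFn

theorem indicatorL1_nonneg {B : Set X} (hB : MeasurableSet B) : 0 ≤ indicatorL1 μ hB := by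
  refine (Lp.coeFn_nonneg _).mp ?_
  filter_upwards [indicatorL1_coeFn hB] with x hx
  rw [Pi.zero_apply, hx]
  exact indicator_nonneg (fun _ _ => zero_le_one) x

end IndicatorLp

theorem L1.integral_coeFn_le_norm (h : Lp ℝ 1 μ) : ∫ x, h x ∂μ ≤ ‖h‖ := by
  rw [← L1.integral_eq_integral]
  exact (le_abs_self _).trans (L1.norm_integral_le h)

variable (μ) in
noncomputable def setIntegralL1 (G : Set X) : WeakDual ℝ (Lp ℝ 1 μ) :=
  WeakDual.toStrongDual.symm (L1.integralCLM.comp (LpToLpRestrictCLM X ℝ ℝ μ 1 G))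

theorem setIntegralL1_apply (G : Set X) (h : Lp ℝ 1 μ) :
    setIntegralL1 μ G h = ∫ x in G, h x ∂μ :=
  ((L1.integral_eq _).symm.trans (L1.integral_eq_integral _)).trans
    (integral_congr_ae (LpToLpRestrictCLM_coeFn ℝ G h))

/-- The functionals `h ↦ ∫ h ∂φ` for the measures `φ ≤ μ`. -/
def dominatedFunctionals (μ : Measure X) : Set (WeakDual ℝ (Lp ℝ 1 μ)) :=
  {Φ | ∀ h : Lp ℝ 1 μ, 0 ≤ h → Φ h ∈ Icc 0 (∫ x, h x ∂μ)}

namespace dominatedFunctionals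

theorem norm_apply_le {Φ : WeakDual ℝ (Lp ℝ 1 μ)} (hΦ : Φ ∈ dominatedFunctionals μ)
    (h : Lp ℝ 1 μ) : ‖Φ h‖ ≤ ‖h‖ := by
  have apply_le : ∀ h, Φ h ≤ ‖h‖ := fun h => calc
    Φ h ≤ Φ |h| := sub_nonneg.mp (by
      rw [← map_sub]; exact (hΦ _ (sub_nonneg.mpr (le_abs_self h))).1)
    _ ≤ ∫ x, |h| x ∂μ := (hΦ _ (abs_nonneg h)).2
    _ ≤ ‖h‖ := (L1.integral_coeFn_le_norm _).trans_eq (norm_abs_eq_norm h)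
  rw [Real.norm_eq_abs, abs_le]
  exact ⟨neg_le.mp (by simpa using apply_le (-h)), apply_le h⟩

theorem isCompact : IsCompact (dominatedFunctionals μ) := by
  refine (WeakDual.isCompact_closedBall (𝕜 := ℝ) 0 1).of_isClosed_subset ?_ fun Φ hΦ => ?_
  · simp only [dominatedFunctionals, ofPred_forall]
    exact isClosed_iInter fun h => isClosed_iInter fun _ =>
      isClosed_Icc.preimage (WeakDual.eval_continuous h)
  · simpa using ContinuousLinearMap.opNorm_le_bound _ zero_le_one fun h => by
      simpa using norm_apply_le hΦ h

theorem convex : Convex ℝ (dominatedFunctionals μ) := by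
  intro Φ₁ h₁ Φ₂ h₂ a b ha hb hab h hh
  obtain ⟨p₁, q₁⟩ := h₁ h hh
  obtain ⟨p₂, q₂⟩ := h₂ h hh
  refine ⟨add_nonneg (mul_nonneg ha p₁) (mul_nonneg hb p₂), ?_⟩
  calc a * Φ₁ h + b * Φ₂ h ≤ a * ∫ x, h x ∂μ + b * ∫ x, h x ∂μ := by gcongr
    _ = ∫ x, h x ∂μ := by rw [← add_mul, hab, one_mul]

theorem setIntegralL1_mem (G : Set X) : setIntegralL1 μ G ∈ dominatedFunctionals μ := by
  intro h hh
  rw [setIntegralL1_apply]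
  have hh' := (Lp.coeFn_nonneg h).mpr hh
  exact ⟨integral_nonneg_of_ae (ae_restrict_of_ae hh'),
    setIntegral_le_integral (L1.integrable_coeFn h) hh'⟩

variable [IsFiniteMeasure μ]

noncomputable def toMeasure {Φ : WeakDual ℝ (Lp ℝ 1 μ)} (hΦ : Φ ∈ dominatedFunctionals μ) :
    Measure X :=
  Measure.ofMeasurable (fun B hB => ENNReal.ofReal (Φ (indicatorL1 μ hB))) (by simp [indicatorL1])
    fun f hf hd => by
      have hsum := (hasSum_indicatorConstLp (μ := μ) (1 : ℝ) one_ne_top hf hd).map Φ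
        (map_continuous Φ)
      exact (congrArg ENNReal.ofReal hsum.tsum_eq.symm).trans
        (ENNReal.ofReal_tsum_of_nonneg (fun i => (hΦ _ (indicatorL1_nonneg (hf i))).1)
          hsum.summable)

theorem toMeasure_apply {Φ : WeakDual ℝ (Lp ℝ 1 μ)} (hΦ : Φ ∈ dominatedFunctionals μ)
    {B : Set X} (hB : MeasurableSet B) :
    toMeasure hΦ B = ENNReal.ofReal (Φ (indicatorL1 μ hB)) :=
  Measure.ofMeasurable_apply B hB

theorem toMeasure_le {Φ : WeakDual ℝ (Lp ℝ 1 μ)} (hΦ : Φ ∈ dominatedFunctionals μ) :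
    toMeasure hΦ ≤ μ := by
  refine Measure.le_iff.mpr fun B hB => ?_
  rw [toMeasure_apply hΦ hB, ← ENNReal.ofReal_toReal (measure_ne_top μ B)]
  refine ENNReal.ofReal_le_ofReal ((hΦ _ (indicatorL1_nonneg hB)).2.trans_eq ?_)
  rw [integral_congr_ae (indicatorL1_coeFn hB), integral_indicator_one hB]
  rfl

end dominatedFunctionals

end L1

section Flow

variable {J : Type*} [MeasurableSpace J]

theorem one_le_measure_prod_compl_of_flow {φ : Measure (J × J)} [IsFiniteMeasure φ] {s t : J}
    (hφ : φ.fst + Measure.dirac t = φ.snd + Measure.dirac s) {A : Set J} (hA : MeasurableSet A)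
    (hs : s ∈ A) (ht : t ∉ A) : 1 ≤ φ (A ×ˢ Aᶜ) := by
  have hbalance := congrArg (fun ν : Measure J => ν A) hφ
  simp only [Measure.add_apply, Measure.fst_apply hA, Measure.snd_apply hA,
    Measure.dirac_apply' _ hA, indicator_of_mem hs, indicator_of_notMem ht, Pi.one_apply,
    add_zero] at hbalance
  rw [← prod_univ, ← univ_prod, ← union_compl_self A, prod_union, union_prod,
    measure_union (disjoint_prod.mpr (Or.inr disjoint_compl_right)) (hA.prod hA.compl),
    measure_union (disjoint_prod.mpr (Or.inl disjoint_compl_right)) (hA.compl.prod hA),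
    add_assoc, ENNReal.add_right_inj (measure_ne_top φ _)] at hbalance
  exact hbalance ▸ le_add_self

theorem ofReal_sub_le_lintegral_of_cut {μ : Measure (J × J)} [SFinite μ] {s t : J} {F : J → ℝ}
    (hF : Measurable F) (hcut : ∀ A, MeasurableSet A → s ∈ A → t ∉ A → 1 ≤ μ (A ×ˢ Aᶜ)) :
    ENNReal.ofReal (F s - F t) ≤ ∫⁻ p, ENNReal.ofReal (F p.1 - F p.2) ∂μ := by
  set cut : ℝ → Set J := fun r => {x | r < F x}
  have hcut_meas : ∀ r, MeasurableSet (cut r) := fun r => measurableSet_lt measurable_const hF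
  have hlayers : Measurable
      (uncurry fun (p : J × J) (r : ℝ) => (Ico (F p.2) (F p.1)).indicator (1 : ℝ → ℝ≥0∞) r) := by
    change Measurable
      ({z : (J × J) × ℝ | F z.1.2 ≤ z.2 ∧ z.2 < F z.1.1}.indicator (1 : _ × ℝ → ℝ≥0∞))
    exact measurable_const.indicator <|
      (measurableSet_le (hF.comp (measurable_snd.comp measurable_fst)) measurable_snd).inter
        (measurableSet_lt measurable_snd (hF.comp (measurable_fst.comp measurable_fst)))
  calc ENNReal.ofReal (F s - F t) = ∫⁻ _ in Ico (F t) (F s), 1 := by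
        rw [setLIntegral_one, Real.volume_Ico]
    _ ≤ ∫⁻ r in Ico (F t) (F s), μ (cut r ×ˢ (cut r)ᶜ) :=
        setLIntegral_mono' measurableSet_Ico fun r hr =>
          hcut _ (hcut_meas r) hr.2 (not_lt.mpr hr.1)
    _ ≤ ∫⁻ r, μ (cut r ×ˢ (cut r)ᶜ) := setLIntegral_le_lintegral _ _
    _ = ∫⁻ r, ∫⁻ p, (Ico (F p.2) (F p.1)).indicator 1 r ∂μ := by
        refine lintegral_congr fun r => ?_
        rw [← lintegral_indicator_one ((hcut_meas r).prod (hcut_meas r).compl)]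
        congr 1
        ext p
        simp only [cut, Set.indicator, mem_prod, mem_ofPred_eq, mem_compl_iff, not_lt, mem_Ico,
          and_comm, Pi.one_apply]
    _ = ∫⁻ p, (∫⁻ r, (Ico (F p.2) (F p.1)).indicator 1 r) ∂μ :=
        (lintegral_lintegral_swap hlayers.aemeasurable).symm
    _ = ∫⁻ p, ENNReal.ofReal (F p.1 - F p.2) ∂μ := by
        simp_rw [lintegral_indicator_one measurableSet_Ico, Real.volume_Ico]

theorem sub_le_setIntegral_of_cut {μ : Measure (J × J)} [SFinite μ] {s t : J} {F : J → ℝ}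
    (hF : Measurable F) (hcut : ∀ A, MeasurableSet A → s ∈ A → t ∉ A → 1 ≤ μ (A ×ˢ Aᶜ))
    (hint : IntegrableOn (fun p => F p.1 - F p.2) {p | F p.2 < F p.1} μ) :
    F s - F t ≤ ∫ p in {p | F p.2 < F p.1}, F p.1 - F p.2 ∂μ := by
  have hG : MeasurableSet {p : J × J | F p.2 < F p.1} :=
    measurableSet_lt (hF.comp measurable_snd) (hF.comp measurable_fst)
  rw [← ENNReal.ofReal_le_ofReal_iff (setIntegral_nonneg hG fun p hp => sub_nonneg.mpr hp.le),
    ofReal_integral_eq_lintegral_ofReal hint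
      ((ae_restrict_iff' hG).mpr (ae_of_all _ fun p hp => sub_nonneg.mpr hp.le)),
    setLIntegral_eq_of_support_subset fun p hp => ?_]
  · exact ofReal_sub_le_lintegral_of_cut hF hcut
  · by_contra hpG
    exact hp (ENNReal.ofReal_eq_zero.mpr (sub_nonpos.mpr (not_lt.mp hpG)))

variable (ψ : Measure (J × J)) [IsFiniteMeasure ψ]

noncomputable def netFlowL1 {A : Set J} (hA : MeasurableSet A) : Lp ℝ 1 ψ :=
  indicatorL1 ψ (hA.prod .univ) - indicatorL1 ψ (MeasurableSet.univ.prod hA)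

theorem netFlowL1_coeFn {A : Set J} (hA : MeasurableSet A) :
    netFlowL1 ψ hA =ᵐ[ψ] fun p => A.indicator 1 p.1 - A.indicator 1 p.2 := by
  classical
  filter_upwards [Lp.coeFn_sub (indicatorL1 ψ (hA.prod .univ))
      (indicatorL1 ψ (MeasurableSet.univ.prod hA)),
    indicatorL1_coeFn (hA.prod .univ), indicatorL1_coeFn (MeasurableSet.univ.prod hA)]
    with p h h₁ h₂
  rw [netFlowL1, h, Pi.sub_apply, h₁, h₂]
  simp only [Set.indicator_apply, mem_prod, mem_univ, and_true, true_and, Pi.one_apply]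

theorem exists_mem_dominatedFunctionals_sum_le {ι : Type*} [Fintype ι] {s t : J}
    (hcut : ∀ A, MeasurableSet A → s ∈ A → t ∉ A → 1 ≤ ψ (A ×ˢ Aᶜ))
    {A : ι → Set J} (hA : ∀ i, MeasurableSet (A i)) (c : ι → ℝ) :
    ∃ Φ ∈ dominatedFunctionals ψ, ∑ i, c i * ((A i).indicator 1 s - (A i).indicator 1 t)
      ≤ ∑ i, c i * Φ (netFlowL1 ψ (hA i)) := by
  set F : J → ℝ := fun x => ∑ i, c i * (A i).indicator 1 x
  have hF : Measurable F :=
    Finset.measurable_sum _ fun i _ => (measurable_const.indicator (hA i)).const_mul _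
  set G := {p : J × J | F p.2 < F p.1}
  refine ⟨setIntegralL1 ψ G, dominatedFunctionals.setIntegralL1_mem G, ?_⟩
  set g : J × J → ℝ := fun p => ∑ i, c i * netFlowL1 ψ (hA i) p
  have hg : Integrable g ψ :=
    integrable_finsetSum _ fun i _ => (L1.integrable_coeFn _).const_mul _
  have hgF : g =ᵐ[ψ] fun p => F p.1 - F p.2 := by
    filter_upwards [ae_all_iff.mpr fun i => netFlowL1_coeFn ψ (hA i)] with p hp
    simp only [g, F, hp, mul_sub, Finset.sum_sub_distrib]
  calc ∑ i, c i * ((A i).indicator 1 s - (A i).indicator 1 t) = F s - F t := by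
        simp only [F, mul_sub, Finset.sum_sub_distrib]
    _ ≤ ∫ p in G, F p.1 - F p.2 ∂ψ :=
        sub_le_setIntegral_of_cut hF hcut (hg.congr hgF).integrableOn
    _ = ∫ p in G, g p ∂ψ := integral_congr_ae (ae_restrict_of_ae hgF.symm)
    _ = ∑ i, c i * setIntegralL1 ψ G (netFlowL1 ψ (hA i)) := by
        rw [integral_finsetSum _ fun i _ => (L1.integrable_coeFn _).restrict.const_mul _]
        simp_rw [integral_const_mul, setIntegralL1_apply]

theorem exists_mem_dominatedFunctionals_netFlow_eq {s t : J}
    (hcut : ∀ A, MeasurableSet A → s ∈ A → t ∉ A → 1 ≤ ψ (A ×ˢ Aᶜ)) :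
    ∃ Φ ∈ dominatedFunctionals ψ, ∀ A (hA : MeasurableSet A),
      Φ (netFlowL1 ψ hA) = A.indicator 1 s - A.indicator 1 t := by
  obtain ⟨Φ, hΦ, h⟩ := exists_mem_forall_eq_of_isCompact_of_convex
    dominatedFunctionals.isCompact dominatedFunctionals.convex
    (fun A : {A : Set J // MeasurableSet A} =>
      WeakBilin.eval (topDualPairing ℝ (Lp ℝ 1 ψ)) (netFlowL1 ψ A.2))
    (fun A => A.1.indicator 1 s - A.1.indicator 1 t)
    fun u c => exists_mem_dominatedFunctionals_sum_le ψ hcut (fun i : u => i.1.2) c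
  exact ⟨Φ, hΦ, fun A hA => h ⟨A, hA⟩⟩

theorem toMeasure_fst_add_dirac_eq {Φ : WeakDual ℝ (Lp ℝ 1 ψ)}
    (hΦ : Φ ∈ dominatedFunctionals ψ) {s t : J}
    (hflow : ∀ A (hA : MeasurableSet A), Φ (netFlowL1 ψ hA) = A.indicator 1 s - A.indicator 1 t) :
    (dominatedFunctionals.toMeasure hΦ).fst + Measure.dirac t
      = (dominatedFunctionals.toMeasure hΦ).snd + Measure.dirac s := by
  ext A hA
  have h := hflow A hA
  rw [netFlowL1, map_sub] at h
  have hind : ∀ x, A.indicator (1 : J → ℝ≥0∞) x = ENNReal.ofReal (A.indicator 1 x) := fun x => by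
    by_cases hx : x ∈ A <;> simp [hx]
  have hind_nonneg : ∀ x, 0 ≤ A.indicator (1 : J → ℝ) x :=
    indicator_nonneg fun _ _ => zero_le_one
  rw [Measure.add_apply, Measure.add_apply, Measure.fst_apply hA, Measure.snd_apply hA,
    Measure.dirac_apply' t hA, Measure.dirac_apply' s hA, ← prod_univ, ← univ_prod,
    dominatedFunctionals.toMeasure_apply hΦ (hA.prod .univ),
    dominatedFunctionals.toMeasure_apply hΦ (MeasurableSet.univ.prod hA), hind, hind,
    ← ENNReal.ofReal_add (hΦ _ (indicatorL1_nonneg _)).1 (hind_nonneg t),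
    ← ENNReal.ofReal_add (hΦ _ (indicatorL1_nonneg _)).1 (hind_nonneg s)]
  congr 1
  linarith

end Flow

theorem stmt_5_general {J : Type*} [MeasurableSpace J]
    (ψ : Measure (J × J)) [IsFiniteMeasure ψ] (s t : J) :
    (∃ φ : Measure (J × J), IsFiniteMeasure φ ∧
        φ.fst + Measure.dirac t = φ.snd + Measure.dirac s ∧ φ ≤ ψ) ↔
      (∀ A : Set J, MeasurableSet A → s ∈ A → t ∉ A → 1 ≤ ψ (A ×ˢ Aᶜ)) := by
  constructor
  · rintro ⟨φ, hφ, hflow, hle⟩ A hA hs ht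
    exact (one_le_measure_prod_compl_of_flow hflow hA hs ht).trans (hle _)
  · intro hcut
    obtain ⟨Φ, hΦ, hflow⟩ := exists_mem_dominatedFunctionals_netFlow_eq ψ hcut
    have hle := dominatedFunctionals.toMeasure_le hΦ
    exact ⟨_, isFiniteMeasure_of_le ψ hle, toMeasure_fst_add_dirac_eq ψ hΦ hflow, hle⟩

/-- **Max-Flow-Min-Cut Theorem for measures.** Given a finite capacity measure `ψ` on `J × J`
and distinct points `s, t`, there is a feasible `s`-`t` flow of value `1` (a finite nonnegative
measure `φ ≤ ψ` with `φ¹ - φ² = δ_s - δ_t`) iff `ψ(A × Aᶜ) ≥ 1` for every Borel set `A`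
containing `s` but not `t`. -/
theorem stmt_5 {J : Type*} [MeasurableSpace J] [StandardBorelSpace J]
    (ψ : Measure (J × J)) [IsFiniteMeasure ψ] (s t : J) (hst : s ≠ t) :
    (∃ φ : Measure (J × J), IsFiniteMeasure φ ∧
        φ.fst + Measure.dirac t = φ.snd + Measure.dirac s ∧ φ ≤ ψ) ↔
      (∀ A : Set J, MeasurableSet A → s ∈ A → t ∉ A → 1 ≤ ψ (A ×ˢ Aᶜ)) :=
  stmt_5_general ψ s t
end

section
/- Let (J, 𝒜) be a standard Borel space, let v : J × J → ℝ be a bounded nonnegative Borel measurable cost function, let ψ be a finite nonnegative Borel measure on J × J (the capacity), and let σ, τ be finite nonnegative Borel measures on J with σ(J) = τ(J). There exists a σ-τ flow φ with φ ≤ ψ and ∫ v dφ = 1 if and only if for every bounded Borel measurable f : J → ℝ and every b ∈ {−1, 0, 1} one has ∫ (f(y) − f(x) + b·v(x,y))₊ dψ(x,y) ≥ ∫ f dτ − ∫ f dσ + b, where g₊ denotes the positive part of the function g. -/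
/-!
Both sides are statements about the convex set of measures `φ ≤ ψ`. For finitely many
constraints, the vectors of moments `(∫ Hᵢ dφ)ᵢ` of such measures form a closed convex set, so
by Hahn–Banach a moment vector `c` is attained as soon as `∑ aᵢ cᵢ ≤ ∫ (∑ aᵢ Hᵢ)₊ dψ` for all
`a`, the right-hand side being the value at the maximizer `ψ|{∑ aᵢ Hᵢ > 0}`. For the cost
constraint together with the balance constraints on finitely many sets `A`, this condition is
the cut inequality for `f = ∑ aₐ 1_A` and `b = a_cost`, and by homogeneity it suffices to know
it for `b ∈ {-1, 0, 1}`.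

Compactness comes from ultrafilter limits: the setwise limit along an ultrafilter of measures
below a finite measure `ψ` is finitely additive and dominated by `ψ`, hence a measure, and
integrals of `ψ`-integrable functions converge to it. This shows that the moment sets above are
closed, and the required flow is the limit of the finite-dimensional solutions along an
ultrafilter on the finite sets of constraints.
-/

open MeasureTheory Set Filter Topology ENNReal Function

theorem Ultrafilter.tendsto_lim_map {ι Y : Type*} [TopologicalSpace Y] [CompactSpace Y]
    (U : Ultrafilter ι) (f : ι → Y) : Tendsto f U (𝓝 (U.map f).lim) := by
  simpa [Tendsto, Ultrafilter.coe_map] using (U.map f).le_nhds_lim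

namespace MeasureTheory

variable {X : Type*} [MeasurableSpace X]

theorem isSetRing_measurableSet : IsSetRing {s : Set X | MeasurableSet s} :=
  ⟨.empty, fun _ _ hs ht => hs.union ht, fun _ _ hs ht => hs.diff ht⟩

theorem iUnion_eq_tsum_of_additive_of_le (m : Set X → ℝ≥0∞) (μ : Measure X) [IsFiniteMeasure μ]
    (hm : ∀ s, MeasurableSet s → m s ≤ μ s)
    (hadd : ∀ s t, MeasurableSet s → MeasurableSet t → Disjoint s t → m (s ∪ t) = m s + m t)
    {f : ℕ → Set X} (hf : ∀ i, MeasurableSet (f i)) (hdisj : Pairwise (Disjoint on f)) :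
    m (⋃ i, f i) = ∑' i, m (f i) := by
  have hempty : m ∅ = 0 := le_zero_iff.1 ((hm ∅ .empty).trans_eq measure_empty)
  let m' := isSetRing_measurableSet.addContent_of_union m hempty fun hs ht => hadd _ _ hs ht
  -- Domination by the finite measure `μ` makes `m` continuous at `∅`.
  refine addContent_iUnion_eq_sum_of_tendsto_zero isSetRing_measurableSet m'
    (fun s hs => ((hm s hs).trans_lt (measure_lt_top μ s)).ne) (fun s hs hanti hinter => ?_)
    hf (.iUnion hf) hdisj
  have hμ : Tendsto (μ ∘ s) atTop (𝓝 0) := by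
    simpa [hinter] using tendsto_measure_iInter_atTop (μ := μ)
      (fun n => (hs n).nullMeasurableSet) hanti ⟨0, measure_ne_top μ _⟩
  exact tendsto_of_tendsto_of_tendsto_of_le_of_le tendsto_const_nhds hμ (fun _ => zero_le)
    fun n => hm _ (hs n)

noncomputable def Measure.ofAdditiveOfLE (m : Set X → ℝ≥0∞) (μ : Measure X) [IsFiniteMeasure μ]
    (hm : ∀ s, MeasurableSet s → m s ≤ μ s)
    (hadd : ∀ s t, MeasurableSet s → MeasurableSet t → Disjoint s t → m (s ∪ t) = m s + m t) :
    Measure X :=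
  Measure.ofMeasurable (fun s _ => m s) (le_zero_iff.1 ((hm ∅ .empty).trans_eq measure_empty))
    fun _ hf hdisj => iUnion_eq_tsum_of_additive_of_le m μ hm hadd hf hdisj

theorem Measure.ofAdditiveOfLE_apply {m : Set X → ℝ≥0∞} {μ : Measure X} [IsFiniteMeasure μ]
    (hm : ∀ s, MeasurableSet s → m s ≤ μ s)
    (hadd : ∀ s t, MeasurableSet s → MeasurableSet t → Disjoint s t → m (s ∪ t) = m s + m t)
    {s : Set X} (hs : MeasurableSet s) : Measure.ofAdditiveOfLE m μ hm hadd s = m s :=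
  Measure.ofMeasurable_apply s hs

section UltraLimit

variable {ι : Type*} (U : Ultrafilter ι) {φ : ι → Measure X} {ψ : Measure X} [IsFiniteMeasure ψ]
  (hφ : ∀ i, φ i ≤ ψ)

noncomputable def Measure.ultraLimit : Measure X :=
  Measure.ofAdditiveOfLE (fun s => (U.map fun i => φ i s).lim) ψ
    (fun s _ => le_of_tendsto (U.tendsto_lim_map _) (.of_forall fun i => hφ i s))
    fun s t _ ht hst => tendsto_nhds_unique (U.tendsto_lim_map _) <| by
      simpa only [measure_union hst ht] using
        (U.tendsto_lim_map fun i => φ i s).add (U.tendsto_lim_map fun i => φ i t)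

theorem Measure.tendsto_ultraLimit_apply {s : Set X} (hs : MeasurableSet s) :
    Tendsto (fun i => φ i s) U (𝓝 (Measure.ultraLimit U hφ s)) := by
  rw [Measure.ultraLimit, Measure.ofAdditiveOfLE_apply _ _ hs]
  exact U.tendsto_lim_map _

theorem Measure.ultraLimit_le : Measure.ultraLimit U hφ ≤ ψ :=
  Measure.le_iff.2 fun s hs => le_of_tendsto (Measure.tendsto_ultraLimit_apply U hφ hs)
    (.of_forall fun i => hφ i s)

end UltraLimit

section SetwiseConvergence

variable {ι E : Type*} [NormedAddCommGroup E] [NormedSpace ℝ E] {l : Filter ι}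
  {φ : ι → Measure X} {μ : Measure X}

theorem SimpleFunc.tendsto_integral_of_tendsto_apply [CompleteSpace E]
    [∀ i, IsFiniteMeasure (φ i)] [IsFiniteMeasure μ]
    (hlim : ∀ s, MeasurableSet s → Tendsto (fun i => φ i s) l (𝓝 (μ s)))
    (g : SimpleFunc X E) : Tendsto (fun i => ∫ x, g x ∂φ i) l (𝓝 (∫ x, g x ∂μ)) := by
  have hsum (ν : Measure X) [IsFiniteMeasure ν] :
      ∫ x, g x ∂ν = ∑ y ∈ g.range, ν.real (g ⁻¹' {y}) • y :=
    g.integral_eq_sum (g.integrable_of_isFiniteMeasure)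
  simp only [hsum]
  refine tendsto_finsetSum _ fun y _ => Tendsto.smul_const ?_ y
  exact (ENNReal.tendsto_toReal (measure_ne_top μ _)).comp (hlim _ (g.measurableSet_preimage _))

theorem edist_integral_le_eLpNorm_sub {ν ψ : Measure X} (hle : ν ≤ ψ) {f g : X → E}
    (hf : Integrable f ν) (hg : Integrable g ν) :
    edist (∫ x, f x ∂ν) (∫ x, g x ∂ν) ≤ eLpNorm (f - g) 1 ψ := by
  rw [edist_eq_enorm_sub, ← integral_sub hf hg, eLpNorm_one_eq_lintegral_enorm]
  exact (enorm_integral_le_lintegral_enorm _).trans (lintegral_mono' hle le_rfl)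

theorem tendsto_integral_of_tendsto_apply_of_le [CompleteSpace E] {ψ : Measure X}
    [IsFiniteMeasure ψ] (hφ : ∀ i, φ i ≤ ψ) (hμ : μ ≤ ψ)
    (hlim : ∀ s, MeasurableSet s → Tendsto (fun i => φ i s) l (𝓝 (μ s)))
    {f : X → E} (hf : Integrable f ψ) :
    Tendsto (fun i => ∫ x, f x ∂φ i) l (𝓝 (∫ x, f x ∂μ)) := by
  have (i : ι) : IsFiniteMeasure (φ i) := isFiniteMeasure_of_le ψ (hφ i)
  have : IsFiniteMeasure μ := isFiniteMeasure_of_le ψ hμ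
  refine EMetric.tendsto_nhds.2 fun ε hε => ?_
  have hε3 : 0 < ε / 3 := ENNReal.div_pos hε.ne' ofNat_ne_top
  obtain ⟨g, hfg, hg⟩ :=
    (memLp_one_iff_integrable.2 hf).exists_simpleFunc_eLpNorm_sub_lt one_ne_top hε3.ne'
  have hgψ : Integrable g ψ := memLp_one_iff_integrable.1 hg
  filter_upwards [EMetric.tendsto_nhds.1 (g.tendsto_integral_of_tendsto_apply hlim) _ hε3]
    with i hi
  calc edist (∫ x, f x ∂φ i) (∫ x, f x ∂μ)
      ≤ edist (∫ x, f x ∂φ i) (∫ x, g x ∂φ i) + edist (∫ x, g x ∂φ i) (∫ x, g x ∂μ)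
        + edist (∫ x, g x ∂μ) (∫ x, f x ∂μ) := edist_triangle4 _ _ _ _
    _ < ε / 3 + ε / 3 + ε / 3 := by
      rw [edist_comm (∫ x, g x ∂μ)]
      gcongr
      · exact (edist_integral_le_eLpNorm_sub (hφ i) (hf.mono_measure (hφ i))
          (hgψ.mono_measure (hφ i))).trans_lt hfg
      · exact (edist_integral_le_eLpNorm_sub hμ (hf.mono_measure hμ)
          (hgψ.mono_measure hμ)).trans_lt hfg
    _ = ε := ENNReal.add_thirds ε

end SetwiseConvergence

theorem integral_max_zero_eq_setIntegral_pos {μ : Measure X} {G : X → ℝ}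
    (hG : AEStronglyMeasurable G μ) :
    ∫ x, max (G x) 0 ∂μ = ∫ x in {x | 0 < G x}, G x ∂μ := by
  rw [← integral_indicator₀ (aestronglyMeasurable_const.nullMeasurableSet_lt hG)]
  congr 1 with x
  by_cases hx : 0 < G x
  · simp [hx, hx.le]
  · simp [hx, not_lt.1 hx]

section Moments

variable {ι : Type*} {ψ : Measure X} {H : ι → X → ℝ}

def momentSet (ψ : Measure X) (H : ι → X → ℝ) : Set (ι → ℝ) :=
  {y | ∃ φ ≤ ψ, ∀ i, ∫ x, H i x ∂φ = y i}

theorem Measure.smul_add_smul_le {ψ μ ν : Measure X} (hμ : μ ≤ ψ) (hν : ν ≤ ψ) {t s : ℝ≥0∞}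
    (hts : t + s = 1) : t • μ + s • ν ≤ ψ :=
  calc t • μ + s • ν ≤ t • ψ + s • ψ := by gcongr
    _ = ψ := by rw [← add_smul, hts, one_smul]

theorem convex_momentSet (hH : ∀ i, Integrable (H i) ψ) : Convex ℝ (momentSet ψ H) := by
  rintro y ⟨μ, hμ, hy⟩ z ⟨ν, hν, hz⟩ t s ht hs hts
  refine ⟨ENNReal.ofReal t • μ + ENNReal.ofReal s • ν,
    Measure.smul_add_smul_le hμ hν (by rw [← ENNReal.ofReal_add ht hs, hts, ofReal_one]),
    fun i => ?_⟩
  rw [integral_add_measure ((hH i).mono_measure hμ |>.smul_measure ofReal_ne_top)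
      ((hH i).mono_measure hν |>.smul_measure ofReal_ne_top),
    integral_smul_measure, integral_smul_measure, toReal_ofReal ht, toReal_ofReal hs, hy, hz]
  rfl

theorem isClosed_momentSet [IsFiniteMeasure ψ] [Countable ι] (hH : ∀ i, Integrable (H i) ψ) :
    IsClosed (momentSet ψ H) := by
  refine IsSeqClosed.isClosed fun y z hy hyz => ?_
  choose φ hφ hφy using hy
  let U := Ultrafilter.of (atTop : Filter ℕ)
  refine ⟨_, Measure.ultraLimit_le U hφ, fun i => tendsto_nhds_unique
    (tendsto_integral_of_tendsto_apply_of_le hφ (Measure.ultraLimit_le U hφ)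
      (fun s hs => Measure.tendsto_ultraLimit_apply U hφ hs) (hH i)) ?_⟩
  simpa only [hφy] using (tendsto_pi_nhds.1 hyz i).mono_left (Ultrafilter.of_le atTop)

theorem mem_momentSet_of_forall_le [IsFiniteMeasure ψ] [Fintype ι]
    (hH : ∀ i, Integrable (H i) ψ) {c : ι → ℝ}
    (hc : ∀ a : ι → ℝ, ∑ i, a i * c i ≤ ∫ x, max (∑ i, a i * H i x) 0 ∂ψ) :
    c ∈ momentSet ψ H := by
  by_contra hcH
  obtain ⟨l, u, hlH, hlc⟩ :=
    geometric_hahn_banach_closed_point (convex_momentSet hH) (isClosed_momentSet hH) hcH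
  classical
  obtain ⟨a, hl⟩ : ∃ a : ι → ℝ, ∀ y, l y = ∑ i, a i * y i :=
    ⟨fun i => l fun j => if i = j then 1 else 0, fun y =>
      (l.toLinearMap.pi_apply_eq_sum_univ y).trans (by simp only [smul_eq_mul, mul_comm]; rfl)⟩
  -- `ψ` restricted to `{G > 0}` maximizes `∫ G dφ` over `φ ≤ ψ`, with value `∫ G⁺ dψ`.
  let G : X → ℝ := fun x => ∑ i, a i * H i x
  have hG : Integrable G ψ := integrable_finsetSum _ fun i _ => (hH i).const_mul _
  have hmax : ∫ x, max (∑ i, a i * H i x) 0 ∂ψ =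
      ∑ i, a i * ∫ x, H i x ∂ψ.restrict {x | 0 < G x} := by
    rw [integral_max_zero_eq_setIntegral_pos hG.1, integral_finsetSum _ fun i _ =>
      ((hH i).const_mul _).restrict]
    simp only [integral_const_mul]
  have hrestrict := hlH _ ⟨ψ.restrict {x | 0 < G x}, Measure.restrict_le_self, fun _ => rfl⟩
  rw [hl] at hrestrict hlc
  linarith [hc a]

end Moments

theorem Measure.integral_fst {α β E : Type*} [MeasurableSpace α]
    [MeasurableSpace β] [NormedAddCommGroup E] [NormedSpace ℝ E] {ρ : Measure (α × β)}
    {f : α → E} (hf : AEStronglyMeasurable f ρ.fst) : ∫ x, f x ∂ρ.fst = ∫ p, f p.1 ∂ρ :=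
  integral_map measurable_fst.aemeasurable hf

theorem Measure.integral_snd {α β E : Type*} [MeasurableSpace α]
    [MeasurableSpace β] [NormedAddCommGroup E] [NormedSpace ℝ E] {ρ : Measure (α × β)}
    {f : β → E} (hf : AEStronglyMeasurable f ρ.snd) : ∫ x, f x ∂ρ.snd = ∫ p, f p.2 ∂ρ :=
  integral_map measurable_snd.aemeasurable hf

end MeasureTheory

theorem Measurable.integrable_of_forall_abs_le {X : Type*} [MeasurableSpace X] {μ : Measure X}
    [IsFiniteMeasure μ] {f : X → ℝ} (hf : Measurable f) (hfb : ∃ C, ∀ x, |f x| ≤ C) :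
    Integrable f μ :=
  let ⟨C, hC⟩ := hfb
  .of_bound hf.aestronglyMeasurable C (.of_forall fun x => (Real.norm_eq_abs _).trans_le (hC x))

section Flow

variable {J : Type*} [MeasurableSpace J] {v : J × J → ℝ} {ψ : Measure (J × J)} {σ τ : Measure J}

theorem integral_sub_integral_eq_of_flow {φ : Measure (J × J)} [IsFiniteMeasure φ]
    [IsFiniteMeasure σ] [IsFiniteMeasure τ] (hflow : φ.fst + τ = φ.snd + σ) {f : J → ℝ}
    (hf : Measurable f) (hfb : ∃ C, ∀ x, |f x| ≤ C) :
    ∫ x, f x ∂τ - ∫ x, f x ∂σ = ∫ p, f p.2 ∂φ - ∫ p, f p.1 ∂φ := by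
  have h := congrArg (fun ν => ∫ x, f x ∂ν) hflow
  simp only [integral_add_measure (hf.integrable_of_forall_abs_le hfb)
    (hf.integrable_of_forall_abs_le hfb)] at h
  rw [Measure.integral_fst hf.aestronglyMeasurable, Measure.integral_snd hf.aestronglyMeasurable]
    at h
  linarith

theorem le_integral_max_of_flow {φ : Measure (J × J)} [IsFiniteMeasure ψ]
    [IsFiniteMeasure σ] [IsFiniteMeasure τ] (hflow : φ.fst + τ = φ.snd + σ) (hφψ : φ ≤ ψ)
    (hv : Integrable v ψ) {f : J → ℝ} (hf : Measurable f) (hfb : ∃ C, ∀ x, |f x| ≤ C) (b : ℝ) :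
    ∫ x, f x ∂τ - ∫ x, f x ∂σ + b * ∫ p, v p ∂φ ≤
      ∫ p, max (f p.2 - f p.1 + b * v p) 0 ∂ψ := by
  have : IsFiniteMeasure φ := isFiniteMeasure_of_le ψ hφψ
  have hfst (ν : Measure (J × J)) [IsFiniteMeasure ν] : Integrable (fun p => f p.1) ν :=
    (hf.comp measurable_fst).integrable_of_forall_abs_le (hfb.imp fun _ h p => h p.1)
  have hsnd (ν : Measure (J × J)) [IsFiniteMeasure ν] : Integrable (fun p => f p.2) ν :=
    (hf.comp measurable_snd).integrable_of_forall_abs_le (hfb.imp fun _ h p => h p.2)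
  have hg : Integrable (fun p => f p.2 - f p.1 + b * v p) ψ :=
    ((hsnd ψ).sub (hfst ψ)).add (hv.const_mul b)
  calc ∫ x, f x ∂τ - ∫ x, f x ∂σ + b * ∫ p, v p ∂φ
      = ∫ p, (f p.2 - f p.1 + b * v p) ∂φ := by
        rw [integral_sub_integral_eq_of_flow hflow hf hfb,
          integral_add (f := fun p => f p.2 - f p.1)
          ((hsnd φ).sub (hfst φ)) ((hv.mono_measure hφψ).const_mul b),
          integral_sub (hsnd φ) (hfst φ), integral_const_mul]
    _ ≤ ∫ p, max (f p.2 - f p.1 + b * v p) 0 ∂φ :=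
        integral_mono (hg.mono_measure hφψ) (hg.pos_part.mono_measure hφψ)
          fun _ => le_max_left _ _
    _ ≤ ∫ p, max (f p.2 - f p.1 + b * v p) 0 ∂ψ :=
        integral_mono_measure hφψ (.of_forall fun _ => le_max_right _ _) hg.pos_part

theorem le_integral_max_of_scaled {f : J → ℝ} {b c : ℝ} (hc : 0 < c)
    (h : ∫ x, c * f x ∂τ - ∫ x, c * f x ∂σ + c * b ≤
      ∫ p, max (c * f p.2 - c * f p.1 + c * b * v p) 0 ∂ψ) :
    ∫ x, f x ∂τ - ∫ x, f x ∂σ + b ≤ ∫ p, max (f p.2 - f p.1 + b * v p) 0 ∂ψ := by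
  have hmax : ∫ p, max (c * f p.2 - c * f p.1 + c * b * v p) 0 ∂ψ =
      c * ∫ p, max (f p.2 - f p.1 + b * v p) 0 ∂ψ := by
    rw [← integral_const_mul]
    congr 1 with p
    rw [mul_max_of_nonneg _ _ hc.le, mul_zero]
    ring_nf
  rw [integral_const_mul, integral_const_mul, hmax] at h
  exact le_of_mul_le_mul_left (by linarith) hc

theorem le_integral_max_of_forall_sign
    (hcut : ∀ f : J → ℝ, Measurable f → (∃ C, ∀ x, |f x| ≤ C) → ∀ b ∈ ({-1, 0, 1} : Set ℝ),
      ∫ x, f x ∂τ - ∫ x, f x ∂σ + b ≤ ∫ p, max (f p.2 - f p.1 + b * v p) 0 ∂ψ)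
    {f : J → ℝ} (hf : Measurable f) (hfb : ∃ C, ∀ x, |f x| ≤ C) (b : ℝ) :
    ∫ x, f x ∂τ - ∫ x, f x ∂σ + b ≤ ∫ p, max (f p.2 - f p.1 + b * v p) 0 ∂ψ := by
  have hscaled (c : ℝ) (hc : 0 < c) (hcb : c * b ∈ ({-1, 0, 1} : Set ℝ)) :
      ∫ x, f x ∂τ - ∫ x, f x ∂σ + b ≤ ∫ p, max (f p.2 - f p.1 + b * v p) 0 ∂ψ := by
    refine le_integral_max_of_scaled hc (hcut _ (hf.const_mul c) ?_ _ hcb)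
    obtain ⟨C, hC⟩ := hfb
    exact ⟨|c| * C, fun x => by
      rw [abs_mul]; exact mul_le_mul_of_nonneg_left (hC x) (abs_nonneg c)⟩
  rcases lt_trichotomy b 0 with hb | rfl | hb
  · exact hscaled (-b)⁻¹ (inv_pos.2 (neg_pos.2 hb)) (by simp [hb.ne])
  · exact hscaled 1 one_pos (by simp)
  · exact hscaled b⁻¹ (inv_pos.2 hb) (by simp [hb.ne'])

theorem integrable_indicator_one_comp {Y : Type*} [MeasurableSpace Y] {φ : Measure Y}
    [IsFiniteMeasure φ] {g : Y → J} (hg : Measurable g) {A : Set J} (hA : MeasurableSet A) :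
    Integrable (fun y => A.indicator (1 : J → ℝ) (g y)) φ :=
  ((integrable_const 1).indicator hA).comp_measurable (μ := φ) hg

theorem integral_indicator_snd_sub_fst {φ : Measure (J × J)} [IsFiniteMeasure φ] {A : Set J}
    (hA : MeasurableSet A) :
    ∫ p, (A.indicator 1 p.2 - A.indicator 1 p.1 : ℝ) ∂φ = φ.snd.real A - φ.fst.real A := by
  have hind {ν : Measure J} : AEStronglyMeasurable (A.indicator (1 : J → ℝ)) ν :=
    (measurable_const.indicator hA).aestronglyMeasurable
  rw [integral_sub (integrable_indicator_one_comp measurable_snd hA)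
    (integrable_indicator_one_comp measurable_fst hA), ← integral_indicator_one hA,
    ← integral_indicator_one hA, Measure.integral_fst hind, Measure.integral_snd hind]

theorem exists_le_flow_on_finset [IsFiniteMeasure ψ] [IsFiniteMeasure σ] [IsFiniteMeasure τ]
    (hv : Integrable v ψ)
    (hcut : ∀ f : J → ℝ, Measurable f → (∃ C, ∀ x, |f x| ≤ C) → ∀ b : ℝ,
      ∫ x, f x ∂τ - ∫ x, f x ∂σ + b ≤ ∫ p, max (f p.2 - f p.1 + b * v p) 0 ∂ψ)
    (F : Finset (Set J)) (hF : ∀ A ∈ F, MeasurableSet A) :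
    ∃ φ ≤ ψ, ∫ p, v p ∂φ = 1 ∧ ∀ A ∈ F, φ.fst A + τ A = φ.snd A + σ A := by
  let H : Option F → J × J → ℝ := fun o =>
    o.elim v fun A p => (A : Set J).indicator 1 p.2 - (A : Set J).indicator 1 p.1
  let c : Option F → ℝ := fun o => o.elim 1 fun A => τ.real A - σ.real A
  have hH : ∀ o, Integrable (H o) ψ := by
    rintro (_ | A)
    · exact hv
    · exact (integrable_indicator_one_comp measurable_snd (hF A A.2)).sub
        (integrable_indicator_one_comp measurable_fst (hF A A.2))
  have hc (a : Option F → ℝ) :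
      ∑ o, a o * c o ≤ ∫ p, max (∑ o, a o * H o p) 0 ∂ψ := by
    let f : J → ℝ := fun x => ∑ A : F, a (some A) * (A : Set J).indicator 1 x
    have hf : Measurable f := Finset.measurable_sum _ fun A _ =>
      (measurable_const.indicator (hF A A.2)).const_mul _
    have hfb : ∃ C, ∀ x, |f x| ≤ C := ⟨∑ A : F, |a (some A)|, fun x =>
      (Finset.abs_sum_le_sum_abs _ _).trans <| Finset.sum_le_sum fun A _ => by
        rw [abs_mul]
        refine mul_le_of_le_one_right (abs_nonneg _) ?_
        by_cases hx : x ∈ (A : Set J) <;> simp [hx]⟩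
    have hint (ν : Measure J) [IsFiniteMeasure ν] :
        ∫ x, f x ∂ν = ∑ A : F, a (some A) * ν.real A := by
      rw [integral_finsetSum _ fun (A : F) _ =>
        ((integrable_const 1).indicator (hF A A.2)).const_mul _]
      refine Finset.sum_congr rfl fun A _ => ?_
      rw [integral_const_mul, integral_indicator_one (hF A A.2)]
    convert hcut f hf hfb (a none) using 1
    · simp only [Fintype.sum_option, Option.elim_none, Option.elim_some, Finset.univ_eq_attach,
        mul_one, mul_sub, Finset.sum_sub_distrib, hint, c]
      ring
    · congr 1 with p
      simp only [Fintype.sum_option, Option.elim_none, Option.elim_some, Finset.univ_eq_attach,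
        mul_sub, Finset.sum_sub_distrib, H, f]
      ring_nf
  obtain ⟨φ, hφψ, hφ⟩ := mem_momentSet_of_forall_le hH hc
  have : IsFiniteMeasure φ := isFiniteMeasure_of_le ψ hφψ
  refine ⟨φ, hφψ, hφ none, fun A hA => ?_⟩
  have hA' := hφ (some ⟨A, hA⟩)
  simp only [H, c, Option.elim, integral_indicator_snd_sub_fst (hF A hA), measureReal_def]
    at hA'
  rw [← ENNReal.toReal_eq_toReal_iff' (by finiteness) (by finiteness),
    toReal_add (by finiteness) (by finiteness), toReal_add (by finiteness) (by finiteness)]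
  linarith

theorem exists_flow_of_forall_le [IsFiniteMeasure ψ] [IsFiniteMeasure σ] [IsFiniteMeasure τ]
    (hv : Integrable v ψ)
    (hcut : ∀ f : J → ℝ, Measurable f → (∃ C, ∀ x, |f x| ≤ C) → ∀ b : ℝ,
      ∫ x, f x ∂τ - ∫ x, f x ∂σ + b ≤ ∫ p, max (f p.2 - f p.1 + b * v p) 0 ∂ψ) :
    ∃ φ ≤ ψ, φ.fst + τ = φ.snd + σ ∧ ∫ p, v p ∂φ = 1 := by
  classical
  choose φ hφψ hφv hφflow using fun F : Finset (Set J) =>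
    exists_le_flow_on_finset hv hcut (F.filter MeasurableSet) fun _ hA =>
      (Finset.mem_filter.1 hA).2
  let U := Ultrafilter.of (atTop : Filter (Finset (Set J)))
  have hlim (s : Set (J × J)) (hs : MeasurableSet s) :=
    Measure.tendsto_ultraLimit_apply U hφψ hs
  refine ⟨_, Measure.ultraLimit_le U hφψ, Measure.ext fun A hA => ?_, ?_⟩
  · have hev : ∀ᶠ F in (U : Filter (Finset (Set J))), (φ F).fst A + τ A = (φ F).snd A + σ A :=
      ((eventually_ge_atTop {A}).filter_mono (Ultrafilter.of_le _)).mono fun F hF =>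
        hφflow F A (Finset.mem_filter.2 ⟨hF (Finset.mem_singleton_self A), hA⟩)
    simp only [Measure.add_apply, Measure.fst_apply hA, Measure.snd_apply hA] at hev ⊢
    exact tendsto_nhds_unique
      (((hlim _ (measurable_fst hA)).add tendsto_const_nhds).congr' (hev.mono fun _ h => h))
      ((hlim _ (measurable_snd hA)).add tendsto_const_nhds)
  · exact tendsto_nhds_unique (tendsto_integral_of_tendsto_apply_of_le hφψ
      (Measure.ultraLimit_le U hφψ) hlim hv) (by simp only [hφv, tendsto_const_nhds])

end Flow

theorem stmt_7_general {J : Type*} [MeasurableSpace J]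
    (v : J × J → ℝ) (hv_meas : Measurable v) (hv_bdd : ∃ C, ∀ p, |v p| ≤ C)
    (ψ : Measure (J × J)) [IsFiniteMeasure ψ]
    (σ τ : Measure J) [IsFiniteMeasure σ] [IsFiniteMeasure τ] :
    (∃ φ : Measure (J × J), IsFiniteMeasure φ ∧ φ.fst + τ = φ.snd + σ ∧ φ ≤ ψ ∧
        (∫ p, v p ∂φ) = 1) ↔
      (∀ f : J → ℝ, Measurable f → (∃ C, ∀ x, |f x| ≤ C) →
        ∀ b : ℝ, b ∈ ({-1, 0, 1} : Set ℝ) →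
          (∫ x, f x ∂τ) - (∫ x, f x ∂σ) + b ≤
            ∫ p, max (f p.2 - f p.1 + b * v p) 0 ∂ψ) := by
  have hv : Integrable v ψ := hv_meas.integrable_of_forall_abs_le hv_bdd
  constructor
  · rintro ⟨φ, -, hflow, hφψ, hφv⟩ f hf hfb b -
    simpa [hφv] using le_integral_max_of_flow hflow hφψ hv hf hfb b
  · intro hcut
    obtain ⟨φ, hφψ, hflow, hφv⟩ := exists_flow_of_forall_le hv fun f hf hfb =>
      le_integral_max_of_forall_sign hcut hf hfb
    exact ⟨φ, isFiniteMeasure_of_le ψ hφψ, hflow, hφψ, hφv⟩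

/-- **Min-cost flow theorem for measures.** Given a bounded nonnegative measurable cost `v`,
a finite capacity measure `ψ` on `J × J`, and finite nonnegative measures `σ, τ` on `J` with
`σ(J) = τ(J)`, there is a feasible `σ`-`τ` flow `φ` with `∫ v dφ = 1` iff
`∫ (f(y) - f(x) + b·v(x,y))₊ dψ ≥ ∫ f dτ - ∫ f dσ + b` for every bounded measurable
`f : J → ℝ` and every `b ∈ {-1, 0, 1}`. -/
theorem stmt_7 {J : Type*} [MeasurableSpace J] [StandardBorelSpace J]
    (v : J × J → ℝ) (hv_meas : Measurable v) (hv_bdd : ∃ C, ∀ p, |v p| ≤ C)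
    (hv_nonneg : ∀ p, 0 ≤ v p)
    (ψ : Measure (J × J)) [IsFiniteMeasure ψ]
    (σ τ : Measure J) [IsFiniteMeasure σ] [IsFiniteMeasure τ]
    (hστ : σ univ = τ univ) :
    (∃ φ : Measure (J × J), IsFiniteMeasure φ ∧ φ.fst + τ = φ.snd + σ ∧ φ ≤ ψ ∧
        (∫ p, v p ∂φ) = 1) ↔
      (∀ f : J → ℝ, Measurable f → (∃ C, ∀ x, |f x| ≤ C) →
        ∀ b : ℝ, b ∈ ({-1, 0, 1} : Set ℝ) →
          (∫ x, f x ∂τ) - (∫ x, f x ∂σ) + b ≤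
            ∫ p, max (f p.2 - f p.1 + b * v p) 0 ∂ψ) :=
  stmt_7_general v hv_meas hv_bdd ψ σ τ
end

section
/- Let (J, 𝒜) be a standard Borel space, let η be a Borel probability measure on J × J whose two marginals both equal π (so (𝒜, η) is a Markov space with stationary distribution π), and assume the Markov space is indecomposable: η(A × Aᶜ) > 0 for every Borel set A ⊆ J with 0 < π(A) < 1. Let P be a Markov transition kernel for η, i.e. a Markov kernel x ↦ P_x from J to J such that η(A × B) = ∫_A P_x(B) dπ(x) for all Borel A, B ⊆ J. Then for every Borel set S ⊆ J with π(S) > 0 and for π-almost every x ∈ J, the Markov chain (w⁰, w¹, w², …) with transition kernel P started at w⁰ = x almost surely visits S, i.e. with probability 1 there exists n ≥ 0 with wⁿ ∈ S. -/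
open MeasureTheory Set
open scoped ENNReal

/-- `avoidProb P S n x` is the probability that the Markov chain with transition kernel `P`
started at `x` avoids the set `S` during its first `n` steps (including time `0`). -/
noncomputable def avoidProb {J : Type*} [MeasurableSpace J]
    (P : ProbabilityTheory.Kernel J J) (S : Set J) : ℕ → J → ℝ≥0∞
  | 0 => Sᶜ.indicator fun _ => 1
  | n + 1 => Sᶜ.indicator fun x => ∫⁻ y, avoidProb P S n y ∂(P x)

/-!
The probability `F x` that the chain started at `x` never visits `S` vanishes on `S` and is
subharmonic: `F ≤ P F`. Since `π` is invariant and `F` is bounded, `F` is harmonic `π`-a.e., and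
so are its truncations `min F c`. A bounded harmonic function cannot drop below `c` from a point
where it exceeds `c`, so the chain started in `A = {F > 0}` stays in `A`; hence `η(A × Aᶜ) = 0`.
As `A` misses `S`, `π(A) < 1`, and indecomposability forces `π(A) = 0`.
-/

open ProbabilityTheory Filter Topology

namespace ProbabilityTheory.Kernel

variable {α : Type*} {mα : MeasurableSpace α} {κ : Kernel α α} {μ : Measure α}

theorem invariant_of_measure_univ_prod {η : Measure (α × α)} (hsnd : η.snd = μ)
    (hη : ∀ B, MeasurableSet B → η (univ ×ˢ B) = ∫⁻ x, κ x B ∂μ) : κ.Invariant μ := by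
  ext B hB
  rw [Measure.bind_apply hB κ.aemeasurable, ← hη B hB, univ_prod, ← Measure.snd_apply hB, hsnd]

theorem Invariant.lintegral_lintegral (hκ : κ.Invariant μ) {g : α → ℝ≥0∞} (hg : Measurable g) :
    ∫⁻ x, ∫⁻ y, g y ∂κ x ∂μ = ∫⁻ x, g x ∂μ := by
  conv_rhs => rw [← hκ.def]
  rw [Measure.lintegral_bind κ.aemeasurable hg.aemeasurable]

section Harmonic

variable {h : α → ℝ≥0∞}

theorem Invariant.ae_eq_lintegral_of_ae_le_lintegral (hκ : κ.Invariant μ) (hh : Measurable h)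
    (hfin : ∫⁻ x, h x ∂μ ≠ ∞) (hle : ∀ᵐ x ∂μ, h x ≤ ∫⁻ y, h y ∂κ x) :
    ∀ᵐ x ∂μ, h x = ∫⁻ y, h y ∂κ x :=
  ae_eq_of_ae_le_of_lintegral_le hle hfin hh.lintegral_kernel.aemeasurable
    (hκ.lintegral_lintegral hh).le

theorem Invariant.ae_lintegral_eq_of_ae_lintegral_le (hκ : κ.Invariant μ) (hh : Measurable h)
    (hfin : ∫⁻ x, h x ∂μ ≠ ∞) (hle : ∀ᵐ x ∂μ, ∫⁻ y, h y ∂κ x ≤ h x) :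
    ∀ᵐ x ∂μ, ∫⁻ y, h y ∂κ x = h x :=
  ae_eq_of_ae_le_of_lintegral_le hle (by rwa [hκ.lintegral_lintegral hh]) hh.aemeasurable
    (hκ.lintegral_lintegral hh).ge

variable [IsMarkovKernel κ]

theorem Invariant.ae_lintegral_min_eq (hκ : κ.Invariant μ) (hh : Measurable h)
    (hfin : ∫⁻ x, h x ∂μ ≠ ∞) (hle : ∀ᵐ x ∂μ, h x ≤ ∫⁻ y, h y ∂κ x) (c : ℝ≥0∞) :
    ∀ᵐ x ∂μ, ∫⁻ y, min (h y) c ∂κ x = min (h x) c := by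
  refine hκ.ae_lintegral_eq_of_ae_lintegral_le (hh.min measurable_const)
    (ne_top_of_le_ne_top hfin (lintegral_mono fun _ => min_le_left _ _)) ?_
  filter_upwards [hκ.ae_eq_lintegral_of_ae_le_lintegral hh hfin hle] with x hx
  refine le_min ?_ ?_
  · exact (lintegral_mono fun _ => min_le_left _ _).trans hx.ge
  · exact (lintegral_mono fun _ => min_le_right _ _).trans (by simp)

theorem Invariant.ae_ae_le_of_lt (hκ : κ.Invariant μ) (hh : Measurable h)
    (hfin : ∫⁻ x, h x ∂μ ≠ ∞) (hle : ∀ᵐ x ∂μ, h x ≤ ∫⁻ y, h y ∂κ x) (c : ℝ≥0∞) :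
    ∀ᵐ x ∂μ, c < h x → ∀ᵐ y ∂κ x, c ≤ h y := by
  filter_upwards [hκ.ae_lintegral_min_eq hh hfin hle c] with x hx hcx
  rw [min_eq_right hcx.le] at hx
  have hmin : (fun y => min (h y) c) =ᵐ[κ x] fun _ => c :=
    ae_eq_of_ae_le_of_lintegral_le (ae_of_all _ fun _ => min_le_right _ _)
      (by rw [hx]; exact hcx.ne_top) aemeasurable_const (by simp [hx])
  filter_upwards [hmin] with y hy
  exact hy ▸ min_le_left _ _

theorem Invariant.ae_ae_pos_of_pos (hκ : κ.Invariant μ) (hh : Measurable h)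
    (hfin : ∫⁻ x, h x ∂μ ≠ ∞) (hle : ∀ᵐ x ∂μ, h x ≤ ∫⁻ y, h y ∂κ x) :
    ∀ᵐ x ∂μ, 0 < h x → ∀ᵐ y ∂κ x, 0 < h y := by
  filter_upwards [ae_all_iff.2 fun n : ℕ => hκ.ae_ae_le_of_lt hh hfin hle (n : ℝ≥0∞)⁻¹]
    with x hx hpos
  obtain ⟨n, hn⟩ := ENNReal.exists_inv_nat_lt hpos.ne'
  filter_upwards [hx n hn] with y hy
  exact (ENNReal.inv_pos.2 (ENNReal.natCast_ne_top n)).trans_le hy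

end Harmonic

end ProbabilityTheory.Kernel

section AvoidProb

variable {J : Type*} [MeasurableSpace J] {P : Kernel J J} {S : Set J}

theorem measurable_avoidProb (hS : MeasurableSet S) : ∀ n, Measurable (avoidProb P S n)
  | 0 => measurable_const.indicator hS.compl
  | n + 1 => (measurable_avoidProb hS n).lintegral_kernel.indicator hS.compl

variable (P S) in
noncomputable def avoidForeverProb (x : J) : ℝ≥0∞ :=
  ⨅ n, avoidProb P S n x

theorem measurable_avoidForeverProb (hS : MeasurableSet S) : Measurable (avoidForeverProb P S) :=
  Measurable.iInf (measurable_avoidProb hS)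

theorem avoidForeverProb_eq_zero_of_mem {x : J} (hx : x ∈ S) : avoidForeverProb P S x = 0 :=
  nonpos_iff_eq_zero.1 <| (iInf_le _ 0).trans_eq (indicator_of_notMem (notMem_compl_iff.2 hx) _)

variable [IsMarkovKernel P]

theorem avoidProb_le_one : ∀ n x, avoidProb P S n x ≤ 1
  | 0, _ => indicator_apply_le' (fun _ => le_rfl) fun _ => zero_le
  | n + 1, _ => indicator_apply_le' (fun _ => (lintegral_mono (avoidProb_le_one n)).trans (by simp))
      fun _ => zero_le

theorem avoidProb_succ_le : ∀ n x, avoidProb P S (n + 1) x ≤ avoidProb P S n x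
  | 0, _ => indicator_le_indicator ((lintegral_mono (avoidProb_le_one 0)).trans (by simp))
  | n + 1, _ => indicator_le_indicator (lintegral_mono (avoidProb_succ_le n))

theorem antitone_avoidProb : Antitone (avoidProb P S) :=
  antitone_nat_of_succ_le avoidProb_succ_le

theorem tendsto_avoidProb (x : J) :
    Tendsto (fun n => avoidProb P S n x) atTop (𝓝 (avoidForeverProb P S x)) :=
  tendsto_atTop_iInf fun _ _ hmn => antitone_avoidProb hmn x

theorem avoidForeverProb_le_one (x : J) : avoidForeverProb P S x ≤ 1 :=
  (iInf_le _ 0).trans (avoidProb_le_one 0 x)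

theorem avoidForeverProb_le_lintegral (hS : MeasurableSet S) (x : J) :
    avoidForeverProb P S x ≤ ∫⁻ y, avoidForeverProb P S y ∂P x := by
  unfold avoidForeverProb
  rw [lintegral_iInf (measurable_avoidProb hS)
    antitone_avoidProb ((lintegral_mono (avoidProb_le_one 0)).trans_lt (by simp)).ne]
  exact le_iInf fun n => (iInf_le _ (n + 1)).trans
    (indicator_apply_le' (fun _ => le_rfl) fun _ => zero_le)

end AvoidProb

theorem stmt_12_general {J : Type*} [MeasurableSpace J]
    (η : Measure (J × J)) [IsProbabilityMeasure η] (π : Measure J)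
    (hsnd : η.snd = π)
    (hindec : ∀ A : Set J, MeasurableSet A → 0 < π A → π A < 1 → 0 < η (A ×ˢ Aᶜ))
    (P : ProbabilityTheory.Kernel J J) [ProbabilityTheory.IsMarkovKernel P]
    (hP : ∀ A B : Set J, MeasurableSet A → MeasurableSet B →
      η (A ×ˢ B) = ∫⁻ x in A, P x B ∂π)
    (S : Set J) (hS : MeasurableSet S) (hSpos : 0 < π S) :
    ∀ᵐ x ∂π, Filter.Tendsto (fun n => avoidProb P S n x) Filter.atTop (nhds 0) := by
  have : IsProbabilityMeasure π := hsnd ▸ inferInstance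
  have hinv : P.Invariant π := Kernel.invariant_of_measure_univ_prod hsnd fun B hB => by
    rw [hP univ B MeasurableSet.univ hB, Measure.restrict_univ]
  set F := avoidForeverProb P S
  have hF : Measurable F := measurable_avoidForeverProb hS
  set A := {x | 0 < F x}
  have hA : MeasurableSet A := measurableSet_lt measurable_const hF
  have hstay := hinv.ae_ae_pos_of_pos hF
    ((lintegral_mono avoidForeverProb_le_one).trans_lt (by simp)).ne
    (ae_of_all _ (avoidForeverProb_le_lintegral hS))
  have hηA : η (A ×ˢ Aᶜ) = 0 := by
    rw [hP A Aᶜ hA hA.compl, setLIntegral_eq_zero_iff hA (P.measurable_coe hA.compl)]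
    filter_upwards [hstay] with x hx hxA
    exact ae_iff.1 (hx hxA)
  have hAS : π A < 1 := calc
    π A ≤ π Sᶜ := measure_mono fun x hx hxS => hx.ne' (avoidForeverProb_eq_zero_of_mem hxS)
    _ < 1 := by
      rw [prob_compl_eq_one_sub hS]
      exact ENNReal.sub_lt_self (by simp) one_ne_zero hSpos.ne'
  have hπA : π A = 0 := by
    by_contra h
    exact (hindec A hA (pos_iff_ne_zero.2 h) hAS).ne' hηA
  filter_upwards [measure_eq_zero_iff_ae_notMem.1 hπA] with x hx
  have hFx : F x = 0 := nonpos_iff_eq_zero.1 (not_lt.1 hx)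
  exact hFx ▸ tendsto_avoidProb x

/-- **Almost sure hitting of positive-measure sets.** Let `η` be an indecomposable Markov space
on a standard Borel space `J` with stationary distribution `π`, and let `P` be a Markov
transition kernel for `η`. Then for every Borel set `S` with `π(S) > 0` and `π`-almost every
starting point `x`, the Markov chain started at `x` almost surely visits `S`; equivalently,
the probability of avoiding `S` for `n` steps tends to `0`. -/
theorem stmt_12 {J : Type*} [MeasurableSpace J] [StandardBorelSpace J]
    (η : Measure (J × J)) [IsProbabilityMeasure η] (π : Measure J)
    (hfst : η.fst = π) (hsnd : η.snd = π)
    (hindec : ∀ A : Set J, MeasurableSet A → 0 < π A → π A < 1 → 0 < η (A ×ˢ Aᶜ))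
    (P : ProbabilityTheory.Kernel J J) [ProbabilityTheory.IsMarkovKernel P]
    (hP : ∀ A B : Set J, MeasurableSet A → MeasurableSet B →
      η (A ×ˢ B) = ∫⁻ x in A, P x B ∂π)
    (S : Set J) (hS : MeasurableSet S) (hSpos : 0 < π S) :
    ∀ᵐ x ∂π, Filter.Tendsto (fun n => avoidProb P S n x) Filter.atTop (nhds 0) :=
  stmt_12_general η π hsnd hindec P hP S hS hSpos
end

section
/- Let (J, 𝒜) be a standard Borel space, let ψ be a finite nonnegative Borel measure on J, and let μ₁, μ₂, … be finite signed Borel measures on J with total variation measures |μ_n| ≤ ψ (setwise). Then there is a strictly increasing sequence of indices n₁ < n₂ < ⋯ and a finite signed Borel measure μ with |μ| ≤ ψ such that μ_{n_i}(A) → μ(A) as i → ∞, for every Borel set A ⊆ J. -/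
/-!
Since `|μ_n| ≤ ψ`, each `μ_n` has a Radon–Nikodym density `f_n` with respect to `ψ`, and
`|f_n| ≤ 1` a.e.; so the `f_n` lie in a ball of `L²(ψ)`, which is a separable Hilbert space
because the Borel σ-algebra of `J` is countably generated. By sequential Banach–Alaoglu some
subsequence converges weakly to `f`, and pairing with indicators gives
`μ_{n_i}(A) = ⟪f_{n_i}, 𝟙_A⟫ → ⟪f, 𝟙_A⟫ = ∫_A f dψ`. The bound `|μ(A)| ≤ ψ(A)`, which
characterises `|μ| ≤ ψ`, passes to the limit.
-/

open MeasureTheory Filter Topology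
open scoped ENNReal InnerProductSpace

theorem InnerProductSpace.exists_subseq_tendsto_inner {𝕜 E : Type*} [RCLike 𝕜]
    [NormedAddCommGroup E] [InnerProductSpace 𝕜 E] [CompleteSpace E]
    [TopologicalSpace.SeparableSpace E] {f : ℕ → E} {C : ℝ} (hf : ∀ n, ‖f n‖ ≤ C) :
    ∃ (φ : ℕ → ℕ) (g : E), StrictMono φ ∧
      ∀ y, Tendsto (fun i => ⟪f (φ i), y⟫_𝕜) atTop (𝓝 ⟪g, y⟫_𝕜) := by
  set T : ℕ → WeakDual 𝕜 E := fun n => StrongDual.toWeakDual (toDual 𝕜 E (f n))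
  have hT : ∀ n, T n ∈ WeakDual.toStrongDual ⁻¹' Metric.closedBall 0 C := by
    simpa [T] using hf
  obtain ⟨T₀, -, φ, hφ, hlim⟩ := WeakDual.isSeqCompact_closedBall 𝕜 E 0 C hT
  refine ⟨φ, (toDual 𝕜 E).symm (WeakDual.toStrongDual T₀), hφ, fun y => ?_⟩
  simpa [T, Function.comp_def] using ((WeakDual.eval_continuous y).tendsto T₀).comp hlim

theorem MeasureTheory.ae_abs_le_one_of_forall_abs_setIntegral_le {α : Type*} [MeasurableSpace α]
    {μ : Measure α} [IsFiniteMeasure μ] {f : α → ℝ} (hf : Integrable f μ)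
    (h : ∀ A, MeasurableSet A → |∫ x in A, f x ∂μ| ≤ μ.real A) : ∀ᵐ x ∂μ, |f x| ≤ 1 := by
  have hle : f ≤ᵐ[μ] fun _ => 1 :=
    ae_le_of_forall_setIntegral_le hf (integrable_const 1) fun A hA _ => by
      simpa using (le_abs_self _).trans (h A hA)
  have hge : (fun _ => -1) ≤ᵐ[μ] f :=
    ae_le_of_forall_setIntegral_le (integrable_const (-1)) hf fun A hA _ => by
      simpa using (neg_abs_le _).trans' (neg_le_neg (h A hA))
  filter_upwards [hle, hge] with x hx₁ hx₂ using abs_le.mpr ⟨hx₂, hx₁⟩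

namespace MeasureTheory.SignedMeasure

variable {α : Type*} [MeasurableSpace α] {s : SignedMeasure α} {ψ : Measure α}

theorem totalVariation_le_iff_abs_le [IsFiniteMeasure ψ] :
    s.totalVariation ≤ ψ ↔ ∀ A, MeasurableSet A → |s A| ≤ ψ.real A := by
  constructor
  · intro h A _
    exact (s.norm_le_totalVariation A).trans
      (ENNReal.toReal_mono (measure_ne_top ψ A) (h A))
  · intro h
    rw [totalVariation_eq_variation]
    refine VectorMeasure.variation_le_of_forall_enorm_le fun A hA => ?_
    rw [Real.enorm_eq_ofReal_abs, ← ofReal_measureReal]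
    exact ENNReal.ofReal_le_ofReal (h A hA)

theorem absolutelyContinuous_of_totalVariation_le (h : s.totalVariation ≤ ψ) :
    s ≪ᵥ ψ.toENNRealVectorMeasure := by
  rw [absolutelyContinuous_ennreal_iff]
  simpa using Measure.absolutelyContinuous_of_le h

theorem totalVariation_le_of_tendsto [IsFiniteMeasure ψ] {ι : Type*} {l : Filter ι} [l.NeBot]
    {t : ι → SignedMeasure α} (ht : ∀ i, (t i).totalVariation ≤ ψ)
    (hlim : ∀ A, MeasurableSet A → Tendsto (fun i => t i A) l (𝓝 (s A))) :
    s.totalVariation ≤ ψ :=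
  totalVariation_le_iff_abs_le.mpr fun A hA =>
    le_of_tendsto (hlim A hA).abs
      (Eventually.of_forall fun i => totalVariation_le_iff_abs_le.mp (ht i) A hA)

theorem ae_abs_rnDeriv_le_one [IsFiniteMeasure ψ] (h : s.totalVariation ≤ ψ) :
    ∀ᵐ x ∂ψ, |s.rnDeriv ψ x| ≤ 1 := by
  refine ae_abs_le_one_of_forall_abs_setIntegral_le (integrable_rnDeriv s ψ) fun A hA => ?_
  rw [← withDensityᵥ_apply (integrable_rnDeriv s ψ) hA,
    withDensityᵥ_rnDeriv_eq s ψ (absolutelyContinuous_of_totalVariation_le h)]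
  exact totalVariation_le_iff_abs_le.mp h A hA

theorem exists_Lp_withDensityᵥ_eq_of_totalVariation_le [IsFiniteMeasure ψ] (p : ℝ≥0∞)
    (h : s.totalVariation ≤ ψ) :
    ∃ f : Lp ℝ p ψ, ‖f‖ ≤ measureUnivNNReal ψ ^ p.toReal⁻¹ ∧ ψ.withDensityᵥ f = s := by
  have hbound : ∀ᵐ x ∂ψ, ‖s.rnDeriv ψ x‖ ≤ 1 := ae_abs_rnDeriv_le_one h
  have hf : MemLp (s.rnDeriv ψ) p ψ :=
    MemLp.of_bound (measurable_rnDeriv s ψ).aestronglyMeasurable 1 hbound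
  refine ⟨hf.toLp _, ?_, ?_⟩
  · have hbound' : ∀ᵐ x ∂ψ, ‖hf.toLp _ x‖ ≤ 1 := by
      filter_upwards [hf.coeFn_toLp, hbound] with x hx hx₁
      rwa [hx]
    simpa only [mul_one] using Lp.norm_le_of_ae_bound zero_le_one hbound'
  · rw [WithDensityᵥEq.congr_ae hf.coeFn_toLp]
    exact withDensityᵥ_rnDeriv_eq s ψ (absolutelyContinuous_of_totalVariation_le h)

end MeasureTheory.SignedMeasure

theorem MeasureTheory.withDensityᵥ_apply_eq_inner_indicatorConstLp {α : Type*}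
    [MeasurableSpace α] {ψ : Measure α} [IsFiniteMeasure ψ] (f : Lp ℝ 2 ψ) {A : Set α}
    (hA : MeasurableSet A) :
    ψ.withDensityᵥ f A = ⟪f, indicatorConstLp 2 hA (measure_ne_top ψ A) (1 : ℝ)⟫_ℝ := by
  rw [withDensityᵥ_apply ((Lp.memLp f).integrable one_le_two) hA, real_inner_comm,
    L2.inner_indicatorConstLp_one]

/-- **Compactness of dominated signed measures.** Let `ψ` be a finite nonnegative Borel measure
on a standard Borel space `J` and let `μ₁, μ₂, …` be finite signed Borel measures with total
variation measures `|μ_n| ≤ ψ`. Then there is a subsequence `n₁ < n₂ < ⋯` and a finite signed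
measure `μ` with `|μ| ≤ ψ` such that `μ_{n_i}(A) → μ(A)` for every Borel set `A`. -/
theorem stmt_14 {J : Type*} [MeasurableSpace J] [StandardBorelSpace J]
    (ψ : Measure J) [IsFiniteMeasure ψ]
    (μ : ℕ → SignedMeasure J) (h : ∀ n, (μ n).totalVariation ≤ ψ) :
    ∃ (φ : ℕ → ℕ) (ν : SignedMeasure J), StrictMono φ ∧ ν.totalVariation ≤ ψ ∧
      ∀ A : Set J, MeasurableSet A →
        Filter.Tendsto (fun i => μ (φ i) A) Filter.atTop (nhds (ν A)) := by
  -- enables the instance `Lp.SecondCountableTopology`, which makes `L²(ψ)` separable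
  have : Fact ((2 : ℝ≥0∞) ≠ ∞) := ⟨ENNReal.ofNat_ne_top⟩
  choose f hf_norm hf_eq using fun n =>
    (μ n).exists_Lp_withDensityᵥ_eq_of_totalVariation_le 2 (h n)
  obtain ⟨φ, g, hφ, hfg⟩ := InnerProductSpace.exists_subseq_tendsto_inner (𝕜 := ℝ) hf_norm
  have hlim : ∀ A, MeasurableSet A →
      Tendsto (fun i => μ (φ i) A) atTop (𝓝 (ψ.withDensityᵥ g A)) := by
    intro A hA
    simp only [← hf_eq, withDensityᵥ_apply_eq_inner_indicatorConstLp _ hA]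
    exact hfg _
  exact ⟨φ, ψ.withDensityᵥ g, hφ,
    SignedMeasure.totalVariation_le_of_tendsto (fun i => h (φ i)) hlim, hlim⟩
end

section
/- Let K₁, …, K_n be open convex sets in a real Banach space B. Then K₁ ∩ ⋯ ∩ K_n = ∅ if and only if there exist bounded linear functionals L₁, …, L_n on B and real numbers a₁, …, a_n such that L₁ + ⋯ + L_n = 0, a₁ + ⋯ + a_n = 0, for each i either (L_i = 0 and a_i = 0) or (L_i(x) > a_i for all x ∈ K_i), and the second alternative holds for at least one i. -/
/-!
If `K₁ ∩ ⋯ ∩ K_n = ∅`, the open convex set `K₁ × ⋯ × K_n ⊆ Bⁿ` misses the diagonal, so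
Hahn–Banach gives a functional on `Bⁿ` vanishing on the diagonal and positive on the product.
Its components `L_i` sum to zero and `∑ L_i x_i > 0` whenever `x_i ∈ K_i`; hence the infima
`c_i` of `L_i` on `K_i` are finite with `∑ c_i ≥ 0`. Take `a_i = c_i`, except that the surplus
`∑ c_i` is subtracted at one index with `L_i ≠ 0`. A nonzero functional is an open map, so
`L_i` does not attain its infimum on the open set `K_i`, which makes the inequalities strict.
-/

open Finset

section SumsOfReals

variable {ι : Type*} [Fintype ι] {A : ι → Set ℝ} {r : ℝ}

lemma bddBelow_of_forall_le_sum (hA : ∀ i, (A i).Nonempty)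
    (h : ∀ x : ι → ℝ, (∀ i, x i ∈ A i) → r ≤ ∑ i, x i) (i : ι) : BddBelow (A i) := by
  classical
  choose y hy using hA
  refine ⟨r - ∑ j ∈ univ \ {i}, y j, fun t ht => ?_⟩
  have key := h (Function.update y i t) fun j => by
    rcases eq_or_ne j i with rfl | hj
    · simpa using ht
    · simpa [hj] using hy j
  rw [sum_update_of_mem (mem_univ i)] at key
  linarith

lemma le_sum_csInf (hA : ∀ i, (A i).Nonempty)
    (h : ∀ x : ι → ℝ, (∀ i, x i ∈ A i) → r ≤ ∑ i, x i) : r ≤ ∑ i, sInf (A i) := by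
  refine le_of_forall_pos_lt_add fun ε hε => ?_
  set δ := ε / (Fintype.card ι + 1)
  have hδ : 0 < δ := by positivity
  choose x hxA hx using fun i => Real.lt_sInf_add_pos (hA i) hδ
  have hcard : Fintype.card ι * δ < ε := by
    rw [mul_div_assoc', div_lt_iff₀ (by positivity)]
    linarith
  calc r ≤ ∑ i, x i := h x hxA
    _ ≤ ∑ i, (sInf (A i) + δ) := sum_le_sum fun i _ => (hx i).le
    _ = ∑ i, sInf (A i) + Fintype.card ι * δ := by simp [sum_add_distrib]
    _ < ∑ i, sInf (A i) + ε := by gcongr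

end SumsOfReals

lemma csInf_lt_of_isOpen {α : Type*} [ConditionallyCompleteLinearOrder α] [TopologicalSpace α]
    [OrderTopology α] [DenselyOrdered α] [NoMinOrder α] {s : Set α} (hs : IsOpen s)
    (hbdd : BddBelow s) {a : α} (ha : a ∈ s) : sInf s < a :=
  let ⟨_, hba, hb⟩ := Filter.Eventually.exists_lt (hs.mem_nhds ha)
  (csInf_le hbdd hb).trans_lt hba

theorem iInter_eq_empty_of_sum_eq_zero {E : Type*} [AddCommGroup E] [Module ℝ E]
    [TopologicalSpace E] {ι : Type*} [Fintype ι] {K : ι → Set E}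
    (L : ι → StrongDual ℝ E) (a : ι → ℝ) (hL : ∑ i, L i = 0) (ha : ∑ i, a i = 0)
    (hle : ∀ i, (L i = 0 ∧ a i = 0) ∨ ∀ x ∈ K i, a i < L i x)
    (hlt : ∃ i, ∀ x ∈ K i, a i < L i x) : ⋂ i, K i = ∅ := by
  refine Set.eq_empty_of_forall_notMem fun x hx => ?_
  rw [Set.mem_iInter] at hx
  obtain ⟨i₀, hi₀⟩ := hlt
  have hsum : ∑ i, a i < ∑ i, L i x := by
    refine sum_lt_sum (fun i _ => ?_) ⟨i₀, mem_univ _, hi₀ x (hx i₀)⟩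
    rcases hle i with ⟨hLi, hai⟩ | hai
    · simp [hLi, hai]
    · exact (hai x (hx i)).le
  rw [ha, ← _root_.sum_apply, hL] at hsum
  exact lt_irrefl 0 hsum

section TopologicalVectorSpace

variable {E : Type*} [AddCommGroup E] [TopologicalSpace E] [IsTopologicalAddGroup E]
  [Module ℝ E] [ContinuousSMul ℝ E]

theorem geometric_hahn_banach_open_submodule {s : Set E} (hs₁ : Convex ℝ s) (hs₂ : IsOpen s)
    (p : Submodule ℝ E) (disj : Disjoint s p) :
    ∃ f : StrongDual ℝ E, (∀ x ∈ p, f x = 0) ∧ ∀ x ∈ s, 0 < f x := by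
  obtain ⟨f, u, hs, hp⟩ := geometric_hahn_banach_open hs₁ hs₂ p.convex disj
  -- a functional bounded below on a subspace vanishes there
  have hf : ∀ x ∈ p, f x = 0 := by
    intro x hx
    by_contra hfx
    have := hp _ (p.smul_mem ((u - 1) / f x) hx)
    rw [map_smul, smul_eq_mul, div_mul_cancel₀ _ hfx] at this
    linarith
  have hu : u ≤ 0 := by simpa using hp 0 p.zero_mem
  exact ⟨-f, fun x hx => by simp [hf x hx], fun x hx => by simpa using (hs x hx).trans_le hu⟩

theorem exists_offsets_of_sum_pos {ι : Type*} [Fintype ι] {K : ι → Set E}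
    (hopen : ∀ i, IsOpen (K i)) (hne : ∀ i, (K i).Nonempty) (L : ι → StrongDual ℝ E)
    (hpos : ∀ x : ι → E, (∀ i, x i ∈ K i) → 0 < ∑ i, L i (x i)) :
    ∃ a : ι → ℝ, ∑ i, a i = 0 ∧ (∀ i, (L i = 0 ∧ a i = 0) ∨ ∀ x ∈ K i, a i < L i x) ∧
      ∃ i, ∀ x ∈ K i, a i < L i x := by
  classical
  have hA : ∀ i, (L i '' K i).Nonempty := fun i => (hne i).image _
  have hsum : ∀ t : ι → ℝ, (∀ i, t i ∈ L i '' K i) → 0 ≤ ∑ i, t i := by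
    intro t ht
    choose x hx hxt using ht
    simpa [hxt] using (hpos x hx).le
  have hbdd := bddBelow_of_forall_le_sum hA hsum
  set c : ι → ℝ := fun i => sInf (L i '' K i)
  have hc_lt : ∀ i, L i ≠ 0 → ∀ x ∈ K i, c i < L i x := fun i hi x hx =>
    csInf_lt_of_isOpen ((L i).isOpenMap_of_ne_zero hi _ (hopen i)) (hbdd i) ⟨x, hx, rfl⟩
  have hc_zero : ∀ i, L i = 0 → c i = 0 := fun i hi => by
    simp [c, hi, (hne i).image_const]
  obtain ⟨i₀, hi₀⟩ : ∃ i, L i ≠ 0 := by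
    by_contra! hL
    choose y hy using hne
    simpa [hL] using hpos y hy
  have hS : 0 ≤ ∑ i, c i := le_sum_csInf hA hsum
  set a : ι → ℝ := c - Pi.single i₀ (∑ i, c i)
  have hsingle : (0 : ι → ℝ) ≤ Pi.single i₀ (∑ i, c i) := Pi.single_nonneg.2 hS
  have ha_le : ∀ i, a i ≤ c i := fun i => sub_le_self _ (hsingle i)
  refine ⟨a, by simp [a, sum_sub_distrib], fun i => ?_,
    i₀, fun x hx => (ha_le i₀).trans_lt (hc_lt i₀ hi₀ x hx)⟩
  by_cases hi : L i = 0
  · have hii₀ : i ≠ i₀ := by rintro rfl; exact hi₀ hi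
    exact Or.inl ⟨hi, by simp [a, hc_zero i hi, hii₀]⟩
  · exact Or.inr fun x hx => (ha_le i).trans_lt (hc_lt i hi x hx)

end TopologicalVectorSpace

theorem stmt_16_general {B : Type*} [NormedAddCommGroup B] [NormedSpace ℝ B]
    (n : ℕ) (K : Fin n → Set B) (hopen : ∀ i, IsOpen (K i)) (hconv : ∀ i, Convex ℝ (K i)) :
    (⋂ i, K i) = ∅ ↔
      ∃ (L : Fin n → (B →L[ℝ] ℝ)) (a : Fin n → ℝ),
        (∑ i, L i) = 0 ∧ (∑ i, a i) = 0 ∧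
        (∀ i, (L i = 0 ∧ a i = 0) ∨ (∀ x ∈ K i, a i < L i x)) ∧
        (∃ i, ∀ x ∈ K i, a i < L i x) := by
  refine ⟨fun h => ?_, fun ⟨L, a, hL, ha, hle, hlt⟩ =>
    iInter_eq_empty_of_sum_eq_zero L a hL ha hle hlt⟩
  by_cases hne : ∀ i, (K i).Nonempty
  swap
  · obtain ⟨i₀, hi₀⟩ := not_forall.1 hne
    exact ⟨0, 0, by simp, by simp, fun _ => Or.inl ⟨rfl, rfl⟩, i₀,
      by simp [Set.not_nonempty_iff_eq_empty.1 hi₀]⟩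
  let diagonal := LinearMap.range (LinearMap.pi fun _ : Fin n => LinearMap.id (R := ℝ) (M := B))
  have disj : Disjoint (Set.univ.pi K) diagonal := by
    refine Set.disjoint_left.2 ?_
    rintro _ hx ⟨b, rfl⟩
    have hb : b ∈ ⋂ i, K i := Set.mem_iInter.2 fun i => hx i (Set.mem_univ i)
    simp [h] at hb
  obtain ⟨f, hf_diag, hf_pos⟩ := geometric_hahn_banach_open_submodule
    (convex_pi fun i _ => hconv i) (isOpen_set_pi Set.finite_univ fun i _ => hopen i) _ disj
  let L i := f.comp (.single ℝ (fun _ : Fin n => B) i)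
  obtain ⟨a, ha, hle, hlt⟩ := exists_offsets_of_sum_pos hopen hne L fun x hx =>
    (f.sum_comp_single ℝ _ x).symm ▸ hf_pos x fun i _ => hx i
  refine ⟨L, a, ?_, ha, hle, hlt⟩
  ext b
  rw [_root_.sum_apply]
  exact (f.sum_comp_single ℝ _ _).trans (hf_diag _ ⟨b, rfl⟩)

/-- **Hahn–Banach separation for finitely many open convex sets.** Open convex sets
`K₁, …, K_n` in a real Banach space `B` have empty intersection iff there are bounded linear
functionals `L₁, …, L_n` and reals `a₁, …, a_n` with `ΣL_i = 0`, `Σa_i = 0`, such that for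
each `i` either `L_i = 0` and `a_i = 0`, or `L_i(x) > a_i` for all `x ∈ K_i`, and the second
alternative holds for at least one `i`. -/
theorem stmt_16 {B : Type*} [NormedAddCommGroup B] [NormedSpace ℝ B] [CompleteSpace B]
    (n : ℕ) (K : Fin n → Set B) (hopen : ∀ i, IsOpen (K i)) (hconv : ∀ i, Convex ℝ (K i)) :
    (⋂ i, K i) = ∅ ↔
      ∃ (L : Fin n → (B →L[ℝ] ℝ)) (a : Fin n → ℝ),
        (∑ i, L i) = 0 ∧ (∑ i, a i) = 0 ∧
        (∀ i, (L i = 0 ∧ a i = 0) ∨ (∀ x ∈ K i, a i < L i x)) ∧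
        (∃ i, ∀ x ∈ K i, a i < L i x) :=
  stmt_16_general n K hopen hconv
end
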